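/- arXiv:math/0509122 — 8 statements merged into one kernel-verified Lean document; each statement's English description precedes it below -/
import Mathlib

section
/- Let A = ⊕_{n∈ℕ} A_{(n)} be an ℕ-graded vertex Lie algebra. Then the pair (A_{(0)}, A_{(1)}) with map ∂: A_{(0)} → A_{(1)} and the restricted operations u_0, u_1 forms a 1-truncated conformal algebra; that is, the identities (∂a)_0 = 0, (∂a)_1 = -a_0, ∂(u_0 a) = u_0 ∂a, u_0 a = -a_0 u, u_0 v = -v_0 u + ∂(v_1 u), u_1 v = v_1 u, and α_0 β_i γ = β_i α_0 γ + (α_0 β)_i γ hold for a ∈ A_{(0)}, u, v ∈ A_{(1)}, α, β, γ ∈ A_{(0)} ⊕ A_{(1)}, i = 0, 1. -/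
open scoped BigOperators

noncomputable section

/-- A vertex Lie algebra over `ℂ`, in component form: `Y₋(a,x) = ∑ₙ (op n a) x^{-n-1}`,
with `d = ∂`. The axioms are truncation, `Y₋(∂a,x) = (d/dx)Y₋(a,x)` (in components
`(∂a)ₙ b = -n a_{n-1} b`), half skew symmetry and the half commutator formula. -/
structure VertexLie (A : Type) [AddCommGroup A] [Module ℂ A] where
  d : A →ₗ[ℂ] A
  op : ℕ → A →ₗ[ℂ] A →ₗ[ℂ] A
  trunc : ∀ a b : A, ∃ N : ℕ, ∀ n ≥ N, op n a b = 0
  op_d_zero : ∀ a b : A, op 0 (d a) b = 0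
  op_d : ∀ (a b : A) (n : ℕ), op (n + 1) (d a) b = (-(n + 1 : ℂ)) • op n a b
  skew : ∀ (a b : A) (n N : ℕ), (∀ i ≥ N, op (n + i) b a = 0) →
    op n a b = ∑ i ∈ Finset.range N,
      ((-1 : ℂ) ^ (n + i + 1) * ((Nat.factorial i : ℂ))⁻¹) • (⇑d)^[i] (op (n + i) b a)
  half_comm : ∀ (a b c : A) (m n : ℕ),
    op m a (op n b c) - op n b (op m a c)
      = ∑ i ∈ Finset.range (m + 1), ((Nat.choose m i : ℂ)) • op (m + n - i) (op i a b) c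

/-- An `ℕ`-graded vertex Lie algebra. -/
structure NGradedVertexLie (A : Type) [AddCommGroup A] [Module ℂ A]
    extends VertexLie A where
  gr : ℕ → Submodule ℂ A
  internal : DirectSum.IsInternal gr
  d_mem : ∀ {r : ℕ} {a : A}, a ∈ gr r → d a ∈ gr (r + 1)
  op_mem : ∀ {n r : ℕ} {a b : A} (m : ℕ), a ∈ gr n → b ∈ gr r →
    m + 1 ≤ n + r → op m a b ∈ gr (n + r - m - 1)
  op_gr_zero : ∀ {n r : ℕ} {a b : A} (m : ℕ), a ∈ gr n → b ∈ gr r →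
    n + r < m + 1 → op m a b = 0

/-!
Only the vanishing of products forced by the grading is needed: for `a ∈ A₍₀₎` and
`u, v ∈ A₍₁₎` the products `a_i u` vanish for `i ≥ 1` and `u_i v`, `(∂a)_i u` vanish for
`i ≥ 2`. This truncates the skew-symmetry sums after one or two terms, which gives the
commutativity identities; the derivation identities are the `∂`-axioms at `n = 0`, and
associativity is the commutator formula at `m = 0`.
-/

namespace VertexLie

variable {A : Type} [AddCommGroup A] [Module ℂ A] (V : VertexLie A)

theorem op_one_d (a b : A) : V.op 1 (V.d a) b = -V.op 0 a b := by
  simpa using V.op_d a b 0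

theorem op_zero_op (a b c : A) (n : ℕ) :
    V.op 0 a (V.op n b c) = V.op n b (V.op 0 a c) + V.op n (V.op 0 a b) c := by
  have h := V.half_comm a b c 0 n
  simp only [zero_add, Finset.sum_range_one, Nat.choose_self, Nat.cast_one, one_smul,
    Nat.sub_zero] at h
  rw [← h, add_sub_cancel]

theorem op_zero_skew_of_op_pos_eq_zero {a b : A} (h : ∀ i ≥ 1, V.op i b a = 0) :
    V.op 0 a b = -V.op 0 b a := by
  simpa using V.skew a b 0 1 fun i hi => h (0 + i) (by omega)

theorem op_zero_skew_of_op_gt_one_eq_zero {a b : A} (h : ∀ i ≥ 2, V.op i b a = 0) :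
    V.op 0 a b = -V.op 0 b a + V.d (V.op 1 b a) := by
  simpa [Finset.sum_range_succ] using V.skew a b 0 2 fun i hi => h (0 + i) (by omega)

theorem op_one_comm_of_op_gt_one_eq_zero {a b : A} (h : ∀ i ≥ 2, V.op i b a = 0) :
    V.op 1 a b = V.op 1 b a := by
  simpa using V.skew a b 1 1 fun i hi => h (1 + i) (by omega)

theorem d_op_zero_of_op_pos_eq_zero {a u : A} (h : ∀ i ≥ 1, V.op i a u = 0) :
    V.d (V.op 0 u a) = V.op 0 u (V.d a) := by
  have hda : ∀ i ≥ 2, V.op i (V.d a) u = 0 := by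
    intro i hi
    obtain ⟨n, rfl⟩ : ∃ n, i = n + 1 := ⟨i - 1, by omega⟩
    rw [V.op_d, h n (by omega), smul_zero]
  rw [V.op_zero_skew_of_op_gt_one_eq_zero hda, V.op_d_zero, V.op_one_d,
    V.op_zero_skew_of_op_pos_eq_zero h, neg_zero, zero_add, map_neg]

end VertexLie

namespace NGradedVertexLie

variable {A : Type} [AddCommGroup A] [Module ℂ A] (G : NGradedVertexLie A)

theorem op_eq_zero_of_add_le {n r i : ℕ} {a b : A} (ha : a ∈ G.gr n) (hb : b ∈ G.gr r)
    (hi : n + r ≤ i) : G.op i a b = 0 :=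
  G.op_gr_zero i ha hb (by omega)

end NGradedVertexLie

/-- For an `ℕ`-graded vertex Lie algebra `A`, the pair `(A₍₀₎, A₍₁₎)` with
`∂ : A₍₀₎ → A₍₁₎` and the restricted operations `u₀, u₁` forms a 1-truncated
conformal algebra: the derivation, commutativity and associativity identities hold. -/
theorem stmt5 {A : Type} [AddCommGroup A] [Module ℂ A] (G : NGradedVertexLie A) :
    (∀ a ∈ G.gr 0, ∀ w ∈ G.gr 0 ⊔ G.gr 1,
      G.op 0 (G.d a) w = 0 ∧ G.op 1 (G.d a) w = - G.op 0 a w) ∧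
    (∀ u ∈ G.gr 1, ∀ a ∈ G.gr 0, G.d (G.op 0 u a) = G.op 0 u (G.d a)) ∧
    (∀ u ∈ G.gr 1, ∀ a ∈ G.gr 0, G.op 0 u a = - G.op 0 a u) ∧
    (∀ u ∈ G.gr 1, ∀ v ∈ G.gr 1, G.op 0 u v = - G.op 0 v u + G.d (G.op 1 v u)) ∧
    (∀ u ∈ G.gr 1, ∀ v ∈ G.gr 1, G.op 1 u v = G.op 1 v u) ∧
    (∀ α ∈ G.gr 0 ⊔ G.gr 1, ∀ β ∈ G.gr 0 ⊔ G.gr 1, ∀ γ ∈ G.gr 0 ⊔ G.gr 1,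
      ∀ i ≤ 1, G.op 0 α (G.op i β γ) = G.op i β (G.op 0 α γ) + G.op i (G.op 0 α β) γ) := by
  refine ⟨fun a _ w _ => ⟨G.op_d_zero a w, G.op_one_d a w⟩, ?_, ?_, ?_, ?_,
    fun α _ β _ γ _ i _ => G.op_zero_op α β γ i⟩
  · exact fun u hu a ha => G.d_op_zero_of_op_pos_eq_zero fun i hi =>
      G.op_eq_zero_of_add_le ha hu hi
  · exact fun u hu a ha => G.op_zero_skew_of_op_pos_eq_zero fun i hi =>
      G.op_eq_zero_of_add_le ha hu hi
  · exact fun u hu v hv => G.op_zero_skew_of_op_gt_one_eq_zero fun i hi =>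
      G.op_eq_zero_of_add_le hv hu hi
  · exact fun u hu v hv => G.op_one_comm_of_op_gt_one_eq_zero fun i hi =>
      G.op_eq_zero_of_add_le hv hu hi
end
end

section
/- A 1-truncated conformal algebra structure on C = C_0 ⊕ C_1 is equivalent to the following data: (C_1, [u,v] := u_0 v) is a Leibniz algebra; C_0 is a C_1-module via u·a = u_0 a; ∂: C_0 → C_1 is a C_1-module homomorphism; ∂C_0 annihilates the C_1-module C_0 ⊕ C_1; and the symmetric pairing ⟨u,v⟩ := u_1 v is a C_1-module homomorphism satisfying u_0 a = -a_0 u, ⟨∂a, u⟩ = -a_0 u, [u,v] + [v,u] = ∂⟨u,v⟩, ⟨u,v⟩ = ⟨v,u⟩ for a ∈ C_0, u,v ∈ C_1. -/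
open scoped BigOperators

noncomputable section

/-- The data of a 1-truncated conformal algebra on `C0 ⊕ C1`:
`d = ∂ : C0 → C1`, `β a u = a₀u`, `γ u a = u₀a`, `br u v = u₀v`, `pr u v = u₁v`
(all other operations vanish for degree reasons). -/
structure OneTruncData (C0 C1 : Type) [AddCommGroup C0] [Module ℂ C0]
    [AddCommGroup C1] [Module ℂ C1] where
  d : C0 →ₗ[ℂ] C1
  β : C0 →ₗ[ℂ] C1 →ₗ[ℂ] C0
  γ : C1 →ₗ[ℂ] C0 →ₗ[ℂ] C0
  br : C1 →ₗ[ℂ] C1 →ₗ[ℂ] C1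
  pr : C1 →ₗ[ℂ] C1 →ₗ[ℂ] C0

/-- The axioms of a 1-truncated conformal algebra (derivation, commutativity,
and all nontrivial typed instances of the associativity axiom `α₀βᵢγ = βᵢα₀γ + (α₀β)ᵢγ`). -/
def IsOneTruncated {C0 C1 : Type} [AddCommGroup C0] [Module ℂ C0]
    [AddCommGroup C1] [Module ℂ C1] (T : OneTruncData C0 C1) : Prop :=
  (∀ a a' : C0, T.γ (T.d a) a' = 0) ∧
  (∀ (a : C0) (u : C1), T.br (T.d a) u = 0) ∧
  (∀ (a : C0) (u : C1), T.pr (T.d a) u = - T.β a u) ∧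
  (∀ (u : C1) (a : C0), T.d (T.γ u a) = T.br u (T.d a)) ∧
  (∀ (u : C1) (a : C0), T.γ u a = - T.β a u) ∧
  (∀ u v : C1, T.br u v = - T.br v u + T.d (T.pr v u)) ∧
  (∀ u v : C1, T.pr u v = T.pr v u) ∧
  (∀ u v w : C1, T.br u (T.br v w) = T.br v (T.br u w) + T.br (T.br u v) w) ∧
  (∀ (u v : C1) (a : C0), T.γ u (T.γ v a) = T.γ v (T.γ u a) + T.γ (T.br u v) a) ∧
  (∀ (u : C1) (a : C0) (v : C1), T.γ u (T.β a v) = T.β a (T.br u v) + T.β (T.γ u a) v) ∧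
  (∀ (a : C0) (u v : C1), T.β a (T.br u v) = T.γ u (T.β a v) + T.β (T.β a u) v) ∧
  (∀ u v w : C1, T.γ u (T.pr v w) = T.pr v (T.br u w) + T.pr (T.br u v) w)

/-- The alternative description of a 1-truncated conformal algebra:
`(C1, br)` is a Leibniz algebra, `C0` is a `C1`-module via `γ`, `d` is a
`C1`-module homomorphism, `∂C0` annihilates the `C1`-module `C0 ⊕ C1`, the
symmetric pairing `pr` is a `C1`-module homomorphism, and the compatibility
relations `u₀a = -a₀u`, `⟨∂a,u⟩ = -a₀u`, `[u,v]+[v,u] = ∂⟨u,v⟩`, `⟨u,v⟩ = ⟨v,u⟩` hold. -/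
def LeibnizDescription {C0 C1 : Type} [AddCommGroup C0] [Module ℂ C0]
    [AddCommGroup C1] [Module ℂ C1] (T : OneTruncData C0 C1) : Prop :=
  (∀ u v w : C1, T.br u (T.br v w) = T.br (T.br u v) w + T.br v (T.br u w)) ∧
  (∀ (u v : C1) (a : C0), T.γ (T.br u v) a = T.γ u (T.γ v a) - T.γ v (T.γ u a)) ∧
  (∀ (u : C1) (a : C0), T.d (T.γ u a) = T.br u (T.d a)) ∧
  (∀ a a' : C0, T.γ (T.d a) a' = 0) ∧
  (∀ (a : C0) (u : C1), T.br (T.d a) u = 0) ∧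
  (∀ u v w : C1, T.γ u (T.pr v w) = T.pr (T.br u v) w + T.pr v (T.br u w)) ∧
  (∀ (u : C1) (a : C0), T.γ u a = - T.β a u) ∧
  (∀ (a : C0) (u : C1), T.pr (T.d a) u = - T.β a u) ∧
  (∀ u v : C1, T.br u v + T.br v u = T.d (T.pr u v)) ∧
  (∀ u v : C1, T.pr u v = T.pr v u)

section

variable {C0 C1 : Type} [AddCommGroup C0] [Module ℂ C0] [AddCommGroup C1] [Module ℂ C1]
  {T : OneTruncData C0 C1}

theorem IsOneTruncated.leibnizDescription (h : IsOneTruncated T) : LeibnizDescription T := by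
  obtain ⟨hγd, hbrd, hprd, hdγ, hγβ, hbr_comm, hpr_comm, hbr_assoc, hγ_assoc, -, -, hpr_assoc⟩ := h
  refine ⟨fun u v w => ?_, fun u v a => ?_, hdγ, hγd, hbrd, fun u v w => ?_, hγβ, hprd,
    fun u v => ?_, hpr_comm⟩
  · rw [hbr_assoc]; abel
  · rw [hγ_assoc]; abel
  · rw [hpr_assoc]; abel
  · rw [hbr_comm u v, hpr_comm v u]; abel

theorem LeibnizDescription.isOneTruncated (h : LeibnizDescription T) : IsOneTruncated T := by
  obtain ⟨hbr_leibniz, hγ_module, hdγ, hγd, hbrd, hpr_hom, hγβ, hprd, hbr_symm, hpr_comm⟩ := h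
  have hβγ : ∀ (a : C0) (u : C1), T.β a u = - T.γ u a := fun a u => by rw [hγβ, neg_neg]
  refine ⟨hγd, hbrd, hprd, hdγ, hγβ, fun u v => ?_, hpr_comm, fun u v w => ?_,
    fun u v a => ?_, fun u a v => ?_, fun a u v => ?_, fun u v w => ?_⟩
  · rw [hpr_comm v u, ← hbr_symm u v]; abel
  · rw [hbr_leibniz]; abel
  · rw [hγ_module]; abel
  -- Rewriting `β` as `-γ`, both identities involving `β` become the module axiom.
  · simp only [hβγ, map_neg, hγ_module]; abel
  · simp only [hβγ, map_neg, LinearMap.neg_apply, hγ_module]; abel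
  · rw [hpr_hom]; abel

end

/-- A 1-truncated conformal algebra structure on `C = C0 ⊕ C1` is equivalent to the
Leibniz-algebra/module description. -/
theorem stmt6 {C0 C1 : Type} [AddCommGroup C0] [Module ℂ C0]
    [AddCommGroup C1] [Module ℂ C1] (T : OneTruncData C0 C1) :
    IsOneTruncated T ↔ LeibnizDescription T :=
  ⟨IsOneTruncated.leibnizDescription, LeibnizDescription.isOneTruncated⟩
end
end

section
/- Let A be an ℕ-graded vertex Poisson algebra. For a, a' ∈ A_{(0)} and u ∈ A_{(1)}, one has (au)_0 a' = a(u_0 a'), i.e., the bracket of degree-1 elements with degree-0 elements is A_{(0)}-linear in the first argument. -/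
open scoped BigOperators

noncomputable section

/-- A vertex Poisson algebra: a differential commutative algebra with a compatible
vertex Lie algebra structure such that each `op n a` is a derivation of the product. -/
structure VertexPoisson (A : Type) [CommRing A] [Algebra ℂ A] extends VertexLie A where
  d_mul : ∀ a b : A, d (a * b) = a * d b + b * d a
  op_mul : ∀ (n : ℕ) (a b c : A), op n a (b * c) = op n a b * c + b * op n a c

/-- An `ℕ`-graded vertex Poisson algebra. -/
structure NGradedVertexPoisson (A : Type) [CommRing A] [Algebra ℂ A]
    extends VertexPoisson A where
  gr : ℕ → Submodule ℂ A
  internal : DirectSum.IsInternal gr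
  one_mem : (1 : A) ∈ gr 0
  mul_mem : ∀ {m n : ℕ} {a b : A}, a ∈ gr m → b ∈ gr n → a * b ∈ gr (m + n)
  d_mem : ∀ {r : ℕ} {a : A}, a ∈ gr r → d a ∈ gr (r + 1)
  op_mem : ∀ {n r : ℕ} {a b : A} (m : ℕ), a ∈ gr n → b ∈ gr r →
    m + 1 ≤ n + r → op m a b ∈ gr (n + r - m - 1)
  op_gr_zero : ∀ {n r : ℕ} {a b : A} (m : ℕ), a ∈ gr n → b ∈ gr r →
    n + r < m + 1 → op m a b = 0

namespace VertexLie

variable {A : Type} [AddCommGroup A] [Module ℂ A]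

theorem op_zero_eq_neg_of_op_pos_eq_zero (V : VertexLie A) {a b : A}
    (h : ∀ i ≥ 1, V.op i b a = 0) : V.op 0 a b = -V.op 0 b a := by
  simpa using V.skew a b 0 1 (by simpa using h)

end VertexLie

namespace NGradedVertexPoisson

variable {A : Type} [CommRing A] [Algebra ℂ A] (G : NGradedVertexPoisson A)

theorem op_zero_eq_neg_of_add_le_one {n r : ℕ} {a b : A} (ha : a ∈ G.gr n) (hb : b ∈ G.gr r)
    (hnr : n + r ≤ 1) : G.op 0 a b = -G.op 0 b a :=
  G.op_zero_eq_neg_of_op_pos_eq_zero fun i hi => G.op_gr_zero i hb ha (by omega)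

theorem op_zero_eq_zero_of_mem_zero {a b : A} (ha : a ∈ G.gr 0) (hb : b ∈ G.gr 0) :
    G.op 0 a b = 0 :=
  G.op_gr_zero 0 ha hb (by omega)

end NGradedVertexPoisson

/-- In an `ℕ`-graded vertex Poisson algebra, for `a, a' ∈ A₍₀₎` and `u ∈ A₍₁₎` one has
`(au)₀a' = a(u₀a')`. -/
theorem stmt12 {A : Type} [CommRing A] [Algebra ℂ A] (G : NGradedVertexPoisson A) :
    ∀ a ∈ G.gr 0, ∀ a' ∈ G.gr 0, ∀ u ∈ G.gr 1,
      G.op 0 (a * u) a' = a * G.op 0 u a' := by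
  intro a ha a' ha' u hu
  have hau : a * u ∈ G.gr 1 := by simpa using G.mul_mem ha hu
  -- Move `a * u` to the right, where `a'₀` acts on it as a derivation killing `a`.
  calc G.op 0 (a * u) a'
      = -G.op 0 a' (a * u) := G.op_zero_eq_neg_of_add_le_one hau ha' le_rfl
    _ = -(G.op 0 a' a * u + a * G.op 0 a' u) := by rw [G.op_mul]
    _ = -(a * -G.op 0 u a') := by
        rw [G.op_zero_eq_zero_of_mem_zero ha' ha, G.op_zero_eq_neg_of_add_le_one ha' hu le_rfl,
          zero_mul, zero_add]
    _ = a * G.op 0 u a' := by ring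
end
end

section
/- Let (𝔸 ⊕ 𝔹, ∂) be a 1-truncated conformal algebra, C(𝔸⊕𝔹) = ℂ[D] ⊗ (𝔸⊕𝔹) with the Y^0_- operations defined by Y^0_-(a,x)a' = 0, Y^0_-(a,x)b = a_0 b x^{-1}, Y^0_-(b,x)a = b_0 a x^{-1}, Y^0_-(b,x)b' = b_0 b' x^{-1} + b_1 b' x^{-2}, extended by the D-translation rules. Then the subspace ∂̂C(𝔸), where ∂̂ = 1⊗∂ − D⊗1 on ℂ[D]⊗𝔸, is a two-sided ideal of C(𝔸⊕𝔹) under the nonassociative products u_n. -/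
open scoped BigOperators

noncomputable section

section FullModel

variable {C0 C1 : Type} [AddCommGroup C0] [Module ℂ C0] [AddCommGroup C1] [Module ℂ C1]

/-- Model of `C(𝔸⊕𝔹) = ℂ[D] ⊗ (𝔸⊕𝔹)` as `(ℕ →₀ 𝔸) × (ℕ →₀ 𝔹)`,
where `Dⁿ⊗a = (single n a, 0)` and `Dⁿ⊗b = (0, single n b)`. -/
abbrev CF (C0 C1 : Type) [Zero C0] [Zero C1] := (ℕ →₀ C0) × (ℕ →₀ C1)

/-- `Dⁿ⊗a` for `a ∈ 𝔸`. -/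
def embFA : ℕ → C0 → CF C0 C1 := fun n a => (Finsupp.single n a, 0)

/-- `Dⁿ⊗b` for `b ∈ 𝔹`. -/
def embFB : ℕ → C1 → CF C0 C1 := fun n b => (0, Finsupp.single n b)

/-- The operator `D` on `C(𝔸⊕𝔹)`. -/
def DF : CF C0 C1 → CF C0 C1 :=
  fun x => (Finsupp.mapDomain (· + 1) x.1, Finsupp.mapDomain (· + 1) x.2)

/-- `op1 T i p n q` is the coefficient of `x^{-i-1}` in `Y⁰₋(p, x)(Dⁿ⊗q)` for a
generator `p = a + b ∈ 𝔸 ⊕ 𝔹`, using the defining formulas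
`Y⁰₋(a,x)a' = 0`, `Y⁰₋(a,x)b' = a₀b' x⁻¹`, `Y⁰₋(b,x)a' = b₀a' x⁻¹`,
`Y⁰₋(b,x)b' = b₀b' x⁻¹ + b₁b' x⁻²` and the translation rule
`Y⁰₋(u,x)Dⁿ⊗v = ∑ᵢ (n choose i)(-1)^{n-i} Dⁱ (d/dx)^{n-i} Y⁰₋(u,x)v`. -/
def op1 (T : OneTruncData C0 C1) (i : ℕ) (p : C0 × C1) (n : ℕ) (q : C0 × C1) : CF C0 C1 :=
  (if i ≤ n then ((n.factorial : ℂ) * (((n - i).factorial : ℂ))⁻¹) •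
      (embFA (n - i) (T.β p.1 q.2 + T.γ p.2 q.1) + embFB (n - i) (T.br p.2 q.2)) else 0)
  + (if 1 ≤ i ∧ i ≤ n + 1 then
      ((i : ℂ) * (n.factorial : ℂ) * (((n + 1 - i).factorial : ℂ))⁻¹) •
        embFA (n + 1 - i) (T.pr p.2 q.2) else 0)

/-- `opF T k s p n q` is the coefficient of `x^{-k-1}` in `Y⁰₋(Dˢ⊗p, x)(Dⁿ⊗q)`,
defined for `s ≥ 1` by the rule
`Y⁰₋(Dˢ⊗p, x)(Dⁿ⊗q) = Sing(e^{xD}(-d/dx)ⁿ Y⁰₋(q,-x)(Dˢ⊗p))`, whose coefficient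
of `x^{-k-1}` equals
`∑_{r, k+r ≥ n} (-1)^{k+r-n+1} (1/r!) ((k+r)!/(k+r-n)!) Dʳ (q_{k+r-n} (Dˢ⊗p))`. -/
def opF (T : OneTruncData C0 C1) (k s : ℕ) (p : C0 × C1) (n : ℕ) (q : C0 × C1) : CF C0 C1 :=
  if s = 0 then op1 T k p n q
  else ∑ r ∈ Finset.range (n + s + 2),
    if n ≤ k + r then
      ((-1 : ℂ) ^ (k + r + n + 1) * ((r.factorial : ℂ))⁻¹ *
        ((k + r).factorial : ℂ) * (((k + r - n).factorial : ℂ))⁻¹) •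
        (DF)^[r] (op1 T (k + r - n) q s p)
    else 0

/-- The subspace `∂̂C(𝔸)`, spanned by the elements `∂̂(Dᵐ⊗a) = Dᵐ⊗∂a - D^{m+1}⊗a`. -/
def IhatF (T : OneTruncData C0 C1) : Submodule ℂ (CF C0 C1) :=
  Submodule.span ℂ {x : CF C0 C1 | ∃ (m : ℕ) (a : C0), x = embFB m (T.d a) - embFA (m + 1) a}

end FullModel

/-!
With the falling factorials `n.descFactorial i = n!/(n-i)!` as coefficients, the 1-truncated
axioms `(∂a)₀ = 0`, `(∂a)₁ = -a₀`, `u₀a = -a₀u` and `∂(u₀a) = u₀∂a` put `Y⁰₋` against `∂a` and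
against `a` in closed form. For a generator `p = a' + b`, the falling-factorial Pascal rule
`(m+1)^{(i)} = m^{(i)} + i m^{(i-1)}` collapses `p_i ∂̂(Dᵐ⊗a)` to a multiple of
`∂̂(D^{m-i}⊗a₀b)`. A product with left factor `Dˢ⊗u`, `s ≥ 1`, is a sum of `Dʳ`-translates of
products `q_j (Dˢ⊗u)`. Since `D` preserves `∂̂C(𝔸)`, this settles the left factor `∂̂(Dᵐ⊗a)`
with `m ≥ 1`; for the right factor `∂̂(Dᵐ⊗a)` of `Dˢ⊗p` the sums for `Dᵐ⊗∂a` and `D^{m+1}⊗a`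
agree term by term. For `m = 0` the sum for `(D⊗a)ₖ` has only two nonzero terms, and they
recover `(∂a)ₖ = -k a_{k-1}`.
-/

open Finset
open scoped Nat

lemma Nat.cast_factorial_ne_zero {K : Type*} [AddMonoidWithOne K] [CharZero K] (n : ℕ) :
    (n ! : K) ≠ 0 :=
  Nat.cast_ne_zero.mpr n.factorial_ne_zero

lemma Nat.cast_descFactorial_eq_factorial_mul_inv {K : Type*} [DivisionRing K] [CharZero K]
    {n i : ℕ} (h : i ≤ n) : (n.descFactorial i : K) = n ! * ((n - i)! : K)⁻¹ := by
  rw [← Nat.factorial_mul_descFactorial h, Nat.cast_mul, Nat.cast_comm,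
    mul_inv_cancel_right₀ (Nat.cast_factorial_ne_zero _)]

lemma Nat.succ_descFactorial_eq_add (m i : ℕ) :
    (m + 1).descFactorial i = m.descFactorial i + i * m.descFactorial (i - 1) := by
  rcases i with _ | j
  · simp
  · rw [Nat.succ_descFactorial_succ, Nat.descFactorial_succ, Nat.add_sub_cancel]
    rcases le_or_gt j m with h | h
    · rw [← Nat.add_mul]
      congr 1
      omega
    · simp [Nat.descFactorial_eq_zero_iff_lt.mpr h]

lemma Finset.sum_range_ite_add_eq {M : Type*} [AddCommMonoid M] {k N L : ℕ} (hN : N < L)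
    {c : M} (hc : N < k → c = 0) : ∑ r ∈ range L, (if k + r = N then c else 0) = c := by
  rcases le_or_gt k N with hk | hk
  · rw [sum_eq_single_of_mem (N - k) (mem_range.mpr (by omega)), if_pos (by omega)]
    exact fun r _ hr => if_neg (by omega)
  · rw [hc hk]
    simp

namespace OneTruncData

variable {C0 C1 : Type} [AddCommGroup C0] [Module ℂ C0] [AddCommGroup C1] [Module ℂ C1]

lemma op1_eq (T : OneTruncData C0 C1) (i : ℕ) (p : C0 × C1) (n : ℕ) (q : C0 × C1) :
    op1 T i p n q =
      (n.descFactorial i : ℂ) •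
          (embFA (n - i) (T.β p.1 q.2 + T.γ p.2 q.1) + embFB (n - i) (T.br p.2 q.2))
        + ((i : ℂ) * n.descFactorial (i - 1)) • embFA (n + 1 - i) (T.pr p.2 q.2) := by
  have hf : (if i ≤ n then (n ! : ℂ) * ((n - i)! : ℂ)⁻¹ else 0) = n.descFactorial i := by
    split_ifs with h
    · exact (Nat.cast_descFactorial_eq_factorial_mul_inv h).symm
    · simp [Nat.descFactorial_eq_zero_iff_lt.mpr (not_le.mp h)]
  have hg : (if 1 ≤ i ∧ i ≤ n + 1 then (i : ℂ) * n ! * ((n + 1 - i)! : ℂ)⁻¹ else 0)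
      = (i : ℂ) * n.descFactorial (i - 1) := by
    split_ifs with h
    · rw [Nat.cast_descFactorial_eq_factorial_mul_inv (by omega),
        show n - (i - 1) = n + 1 - i by omega, mul_assoc]
    · rcases not_and_or.mp h with h | h
      · simp [show i = 0 by omega]
      · simp [Nat.descFactorial_eq_zero_iff_lt.mpr (show n < i - 1 by omega)]
  rw [op1, ← hf, ← hg, ite_smul, ite_smul, zero_smul, zero_smul]

lemma op1_eq_zero (T : OneTruncData C0 C1) {i n : ℕ} (h : n + 2 ≤ i) (p q : C0 × C1) :
    op1 T i p n q = 0 := by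
  rw [op1, if_neg (by omega), if_neg (by omega), add_zero]

lemma op1_right_partial {T : OneTruncData C0 C1} (hT : IsOneTruncated T) (i : ℕ)
    (p : C0 × C1) (n : ℕ) (a : C0) :
    op1 T i p n (0, T.d a) = -((n.descFactorial i : ℂ) • embFB (n - i) (T.d (T.β a p.2))
      + ((i : ℂ) * n.descFactorial (i - 1)) • embFA (n + 1 - i) (T.β a p.2)) := by
  obtain ⟨h1, -, h3, h4, h5, -, h7, -⟩ := hT
  have hβ : T.β p.1 (T.d a) = 0 := by rw [← neg_eq_zero, ← h5, h1]
  have hbr : T.br p.2 (T.d a) = -T.d (T.β a p.2) := by rw [← h4, h5, map_neg]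
  simp [op1_eq, embFA, embFB, hβ, hbr, h7 p.2, h3]

lemma op1_right_ofA {T : OneTruncData C0 C1} (hT : IsOneTruncated T) (i : ℕ) (p : C0 × C1)
    (n : ℕ) (a : C0) :
    op1 T i p n (a, 0) = -((n.descFactorial i : ℂ) • embFA (n - i) (T.β a p.2)) := by
  simp [op1_eq, embFA, embFB, hT.2.2.2.2.1]

lemma op1_left_partial {T : OneTruncData C0 C1} (hT : IsOneTruncated T) (i n : ℕ) (a : C0)
    (q : C0 × C1) :
    op1 T i (0, T.d a) n q =
      -(((i : ℂ) * n.descFactorial (i - 1)) • embFA (n + 1 - i) (T.β a q.2)) := by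
  obtain ⟨h1, h2, h3, -⟩ := hT
  simp [op1_eq, embFA, embFB, h1, h2, h3]

lemma op1_left_ofA (T : OneTruncData C0 C1) (i n : ℕ) (a : C0) (q : C0 × C1) :
    op1 T i (a, 0) n q = (n.descFactorial i : ℂ) • embFA (n - i) (T.β a q.2) := by
  simp [op1_eq, embFA, embFB]

lemma hatD_mem_IhatF (T : OneTruncData C0 C1) (j : ℕ) (c : C0) :
    embFB j (T.d c) - embFA (j + 1) c ∈ IhatF T :=
  Submodule.subset_span ⟨j, c, rfl⟩

lemma descFactorial_smul_hatD_mem_IhatF (T : OneTruncData C0 C1) (m i : ℕ) (c : C0) :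
    (m.descFactorial i : ℂ) • (embFB (m - i) (T.d c) - embFA (m + 1 - i) c) ∈ IhatF T := by
  rcases le_or_gt i m with h | h
  · rw [show m + 1 - i = m - i + 1 by omega]
    exact Submodule.smul_mem _ _ (hatD_mem_IhatF T _ _)
  · simp [Nat.descFactorial_eq_zero_iff_lt.mpr h]

lemma op1_right_hatD_mem {T : OneTruncData C0 C1} (hT : IsOneTruncated T) (i : ℕ)
    (p : C0 × C1) (m : ℕ) (a : C0) :
    op1 T i p m (0, T.d a) - op1 T i p (m + 1) (a, 0) ∈ IhatF T := by
  rw [op1_right_partial hT, op1_right_ofA hT, Nat.succ_descFactorial_eq_add]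
  convert Submodule.neg_mem _ (descFactorial_smul_hatD_mem_IhatF T m i (T.β a p.2)) using 1
  push_cast
  module

def DFLinear : Module.End ℂ (CF C0 C1) :=
  (Finsupp.lmapDomain C0 ℂ (· + 1)).prodMap (Finsupp.lmapDomain C1 ℂ (· + 1))

lemma DF_iterate (r : ℕ) : (DF : CF C0 C1 → CF C0 C1)^[r] = ⇑(DFLinear ^ r) :=
  (Module.End.coe_pow DFLinear r).symm

lemma DFLinear_pow_embFA (r n : ℕ) (a : C0) :
    (DFLinear ^ r) (embFA n a : CF C0 C1) = embFA (n + r) a := by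
  induction r with
  | zero => rfl
  | succ r ih =>
    rw [pow_succ', Module.End.mul_apply, ih]
    simp [DFLinear, embFA, Finsupp.mapDomain_single, add_assoc]

lemma DFLinear_pow_embFB (r n : ℕ) (b : C1) :
    (DFLinear ^ r) (embFB n b : CF C0 C1) = embFB (n + r) b := by
  induction r with
  | zero => rfl
  | succ r ih =>
    rw [pow_succ', Module.End.mul_apply, ih]
    simp [DFLinear, embFB, Finsupp.mapDomain_single, add_assoc]

lemma DFLinear_pow_mem_IhatF (T : OneTruncData C0 C1) (r : ℕ) {x : CF C0 C1}
    (hx : x ∈ IhatF T) : (DFLinear ^ r) x ∈ IhatF T := by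
  have hle : IhatF T ≤ (IhatF T).comap (DFLinear ^ r) := by
    refine Submodule.span_le.mpr ?_
    rintro _ ⟨m, a, rfl⟩
    simpa [DFLinear_pow_embFA, DFLinear_pow_embFB, add_right_comm] using
      hatD_mem_IhatF T (m + r) a
  exact hle hx

/-- The coefficient in `opF`; the factor `(k + r).descFactorial n` vanishes exactly on the
terms `opF` drops (`k + r < n`). -/
def opCoeff (k r n : ℕ) : ℂ := (-1) ^ (k + r + n + 1) * (k + r).descFactorial n / r !

lemma opCoeff_succ (k r n : ℕ) :
    opCoeff k r (n + 1) = -((k + r - n : ℕ) : ℂ) * opCoeff k r n := by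
  simp only [opCoeff, Nat.descFactorial_succ, Nat.cast_mul, pow_succ]
  ring

lemma opCoeff_of_add_eq {k r n j : ℕ} (h : k + r = n + j) :
    opCoeff k r n = (-1) ^ (j + 1) * (n + j).descFactorial k / j ! := by
  have hn := Nat.factorial_mul_descFactorial (Nat.le_add_right n j)
  have hk := Nat.factorial_mul_descFactorial (show k ≤ n + j by omega)
  rw [Nat.add_sub_cancel_left] at hn
  rw [show n + j - k = r by omega] at hk
  have hsign : (-1 : ℂ) ^ (k + r + n + 1) = (-1) ^ (j + 1) := by
    rw [h, show n + j + n + 1 = 2 * n + (j + 1) by ring, pow_add, pow_mul]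
    simp
  rw [opCoeff, hsign, h, div_eq_div_iff (Nat.cast_factorial_ne_zero _)
    (Nat.cast_factorial_ne_zero _), mul_assoc, mul_assoc]
  congr 1
  exact_mod_cast (mul_comm _ _).trans (hn.trans (hk.symm.trans (mul_comm _ _)))

lemma ite_smul_eq_opCoeff_smul (k r n : ℕ) (x : CF C0 C1) :
    (if n ≤ k + r then
      ((-1 : ℂ) ^ (k + r + n + 1) * ((r ! : ℂ))⁻¹ * ((k + r)! : ℂ) * (((k + r - n)! : ℂ))⁻¹) • x
      else 0) = opCoeff k r n • x := by
  split_ifs with h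
  · rw [opCoeff, Nat.cast_descFactorial_eq_factorial_mul_inv h]
    congr 1
    ring
  · simp [opCoeff, Nat.descFactorial_eq_zero_iff_lt.mpr (not_le.mp h)]

lemma opF_zero (T : OneTruncData C0 C1) (k : ℕ) (p : C0 × C1) (n : ℕ) (q : C0 × C1) :
    opF T k 0 p n q = op1 T k p n q :=
  if_pos rfl

lemma opF_eq_sum (T : OneTruncData C0 C1) (k : ℕ) {s : ℕ} (hs : s ≠ 0) (p : C0 × C1) (n : ℕ)
    (q : C0 × C1) {L : ℕ} (hL : n + s + 2 ≤ L) :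
    opF T k s p n q = ∑ r ∈ range L, opCoeff k r n • (DFLinear ^ r) (op1 T (k + r - n) q s p) := by
  rw [opF, if_neg hs]
  simp only [ite_smul_eq_opCoeff_smul, DF_iterate]
  refine sum_subset (range_mono hL) fun r _ hr => ?_
  rw [op1_eq_zero T (by simp at hr; omega), map_zero, smul_zero]

lemma opF_right_partial_eq {T : OneTruncData C0 C1} (hT : IsOneTruncated T) (k : ℕ) {s : ℕ}
    (hs : s ≠ 0) (p : C0 × C1) (m : ℕ) (a : C0) :
    opF T k s p m (0, T.d a) = opF T k s p (m + 1) (a, 0) := by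
  rw [opF_eq_sum T k hs p m _ (L := m + 1 + s + 2) (by omega),
    opF_eq_sum T k hs p (m + 1) _ le_rfl]
  refine sum_congr rfl fun r _ => ?_
  rw [op1_left_partial hT, op1_left_ofA, opCoeff_succ, map_neg, map_smul, map_smul,
    DFLinear_pow_embFA, DFLinear_pow_embFA, smul_neg, smul_smul, smul_smul]
  rcases Nat.eq_zero_or_pos (k + r - m) with h | h
  · simp [h]
  · rw [show s + 1 - (k + r - m) = s - (k + r - (m + 1)) by omega,
      show k + r - m - 1 = k + r - (m + 1) by omega, ← neg_smul]
    congr 1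
    ring

lemma opF_left_hatD_mem {T : OneTruncData C0 C1} (hT : IsOneTruncated T) (k : ℕ) {m : ℕ}
    (hm : m ≠ 0) (a : C0) (n : ℕ) (q : C0 × C1) :
    opF T k m (0, T.d a) n q - opF T k (m + 1) (a, 0) n q ∈ IhatF T := by
  rw [opF_eq_sum T k hm _ n q (L := n + (m + 1) + 2) (by omega),
    opF_eq_sum T k m.succ_ne_zero _ n q le_rfl, ← sum_sub_distrib]
  refine Submodule.sum_mem _ fun r _ => ?_
  rw [← smul_sub, ← map_sub]
  exact Submodule.smul_mem _ _ (DFLinear_pow_mem_IhatF T r (op1_right_hatD_mem hT _ q m a))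

lemma opCoeff_mul_descFactorial_one_eq_zero {k r n : ℕ}
    (h : ¬(n ≤ k + r ∧ k + r ≤ n + 1)) :
    opCoeff k r n * (1 : ℕ).descFactorial (k + r - n) = 0 := by
  rcases not_and_or.mp h with h | h
  · simp [opCoeff, Nat.descFactorial_eq_zero_iff_lt.mpr (not_le.mp h)]
  · simp [Nat.descFactorial_eq_zero_iff_lt.mpr (show 1 < k + r - n by omega)]

lemma sum_opCoeff_mul_descFactorial_one (k n : ℕ) :
    ∑ r ∈ range (n + 1 + 2), opCoeff k r n * (1 : ℕ).descFactorial (k + r - n)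
      = k * n.descFactorial (k - 1) := by
  have hterm : ∀ r, opCoeff k r n * (1 : ℕ).descFactorial (k + r - n) =
      (if k + r = n then -(n.descFactorial k : ℂ) else 0)
        + (if k + r = n + 1 then ((n + 1).descFactorial k : ℂ) else 0) := by
    intro r
    by_cases h0 : k + r = n
    · simp [opCoeff_of_add_eq (j := 0) h0, h0]
    by_cases h1 : k + r = n + 1
    · simp [opCoeff_of_add_eq h1, h1]
    rw [opCoeff_mul_descFactorial_one_eq_zero (by omega), if_neg h0, if_neg h1, add_zero]
  rw [sum_congr rfl fun r _ => hterm r, sum_add_distrib,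
    sum_range_ite_add_eq (by omega) (by simp [Nat.descFactorial_eq_zero_iff_lt]),
    sum_range_ite_add_eq (by omega) (by simp [Nat.descFactorial_eq_zero_iff_lt]),
    Nat.succ_descFactorial_eq_add]
  push_cast
  ring

lemma opF_zero_left_partial_eq {T : OneTruncData C0 C1} (hT : IsOneTruncated T) (k : ℕ)
    (a : C0) (n : ℕ) (q : C0 × C1) :
    opF T k 0 (0, T.d a) n q = opF T k 1 (a, 0) n q := by
  have hterm : ∀ r, opCoeff k r n • (DFLinear ^ r) (op1 T (k + r - n) q 1 (a, 0)) =
      -(opCoeff k r n * (1 : ℕ).descFactorial (k + r - n)) • embFA (n + 1 - k) (T.β a q.2) := by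
    intro r
    rw [op1_right_ofA hT, map_neg, map_smul, DFLinear_pow_embFA, smul_neg, smul_smul, ← neg_smul]
    by_cases h : n ≤ k + r ∧ k + r ≤ n + 1
    · rw [show 1 - (k + r - n) + r = n + 1 - k by omega]
    · rw [opCoeff_mul_descFactorial_one_eq_zero h, neg_zero, zero_smul, zero_smul]
  rw [opF_zero, op1_left_partial hT, opF_eq_sum T k one_ne_zero _ n q le_rfl,
    sum_congr rfl fun r _ => hterm r, ← sum_smul, sum_neg_distrib,
    sum_opCoeff_mul_descFactorial_one, neg_smul]

end OneTruncData

/-- For a 1-truncated conformal algebra `(𝔸⊕𝔹, ∂)`, the subspace `∂̂C(𝔸)` of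
`C(𝔸⊕𝔹) = ℂ[D]⊗(𝔸⊕𝔹)` is a two-sided ideal for the nonassociative products `uₙ`:
all products of generators with `∂̂(Dᵐ⊗a) = Dᵐ⊗∂a - D^{m+1}⊗a`, on either side,
land in `∂̂C(𝔸)`. -/
theorem stmt13 {C0 C1 : Type} [AddCommGroup C0] [Module ℂ C0]
    [AddCommGroup C1] [Module ℂ C1]
    (T : OneTruncData C0 C1) (hT : IsOneTruncated T) :
    (∀ (k s : ℕ) (p : C0 × C1) (m : ℕ) (a : C0),
      opF T k s p m ((0 : C0), T.d a) - opF T k s p (m + 1) (a, (0 : C1)) ∈ IhatF T) ∧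
    (∀ (k m : ℕ) (a : C0) (n : ℕ) (q : C0 × C1),
      opF T k m ((0 : C0), T.d a) n q - opF T k (m + 1) (a, (0 : C1)) n q ∈ IhatF T) := by
  refine ⟨fun k s p m a => ?_, fun k m a n q => ?_⟩
  · rcases eq_or_ne s 0 with rfl | hs
    · simpa only [OneTruncData.opF_zero] using OneTruncData.op1_right_hatD_mem hT k p m a
    · rw [OneTruncData.opF_right_partial_eq hT k hs p m a, sub_self]
      exact zero_mem _
  · rcases eq_or_ne m 0 with rfl | hm
    · rw [OneTruncData.opF_zero_left_partial_eq hT k a n q, sub_self]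
      exact zero_mem _
    · exact OneTruncData.opF_left_hatD_mem hT k hm a n q
end
end

section
/- Let (𝔸 ⊕ 𝔹, ∂) be a 1-truncated conformal algebra and 𝒞 = C(𝔸⊕𝔹)/∂̂C(𝔸). Then in 𝒞, the skew symmetry Y^0_-(u,x)v = Sing(e^{xD}Y^0_-(v,-x)u) holds for all u, v ∈ 𝔸 ⊕ 𝔹. -/
open scoped BigOperators

noncomputable section

section QuotientModel

variable {C0 C1 : Type} [AddCommGroup C0] [Module ℂ C0] [AddCommGroup C1] [Module ℂ C1]

/-- Model of the quotient `𝒞 = C(𝔸⊕𝔹)/∂̂C(𝔸)` as `𝔸 × (ℕ →₀ 𝔹)`: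
the class of `1⊗a` is `(a,0)` and the class of `Dⁿ⊗b` is `(0, single n b)`. -/
abbrev QC (C0 C1 : Type) [Zero C1] := C0 × (ℕ →₀ C1)

/-- The class of `Dⁿ⊗a` for `a ∈ 𝔸` in the quotient: `Dⁿ⊗a = D^{n-1}⊗∂a` for `n ≥ 1`. -/
def embQ (T : OneTruncData C0 C1) : ℕ → C0 → QC C0 C1
  | 0, a => (a, 0)
  | (m+1), a => (0, Finsupp.single m (T.d a))

/-- The class of `Dⁿ⊗b` for `b ∈ 𝔹`. -/
def embQB : ℕ → C1 → QC C0 C1 := fun n b => (0, Finsupp.single n b)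

/-- The operator `D` on the quotient model. -/
def DQ (T : OneTruncData C0 C1) : QC C0 C1 → QC C0 C1 :=
  fun x => (0, Finsupp.single 0 (T.d x.1) + Finsupp.mapDomain (· + 1) x.2)

/-- The generator `a + b ∈ 𝔸 ⊕ 𝔹` viewed in the quotient model. -/
def genQ : C0 × C1 → QC C0 C1 := fun p => (p.1, Finsupp.single 0 p.2)

/-- The component operation `pᵢ x` for a generator `p = a + b ∈ 𝔸 ⊕ 𝔹` acting on a
general element `x` of the quotient model, given by the explicit formulas
`Y⁰₋(a,x)a' = 0`, `Y⁰₋(a,x)b = a₀b x⁻¹`, `Y⁰₋(b,x)a = b₀a x⁻¹`,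
`Y⁰₋(b,x)b' = b₀b' x⁻¹ + b₁b' x⁻²` extended by the `D`-translation rules, i.e.
`pᵢ(Dⁿ⊗b') = (n!/(n-i)!) D^{n-i}(a₀b' + b₀b') + (i·n!/(n+1-i)!) D^{n+1-i}(b₁b')`. -/
def opQ (T : OneTruncData C0 C1) (i : ℕ) (p : C0 × C1) (x : QC C0 C1) : QC C0 C1 :=
  (if i = 0 then ((T.γ p.2 x.1, 0) : QC C0 C1) else 0)
  + x.2.sum fun n b' =>
      (if i ≤ n then ((n.factorial : ℂ) * (((n - i).factorial : ℂ))⁻¹) •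
          (embQ T (n - i) (T.β p.1 b') + embQB (n - i) (T.br p.2 b')) else 0)
      + (if 1 ≤ i ∧ i ≤ n + 1 then
          ((i : ℂ) * (n.factorial : ℂ) * (((n + 1 - i).factorial : ℂ))⁻¹) •
            embQ T (n + 1 - i) (T.pr p.2 b') else 0)

/-- The operation `uᵢv` of two generators `u, v ∈ 𝔸 ⊕ 𝔹`, which again lies in `𝔸 ⊕ 𝔹`. -/
def uopv (T : OneTruncData C0 C1) : ℕ → C0 × C1 → C0 × C1 → C0 × C1
  | 0, p, q => (T.β p.1 q.2 + T.γ p.2 q.1, T.br p.2 q.2)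
  | 1, p, q => (T.pr p.2 q.2, 0)
  | _+2, _, _ => 0

end QuotientModel

/-! Since `vⱼu = 0` for `j ≥ 2`, at most the terms `r = 0, 1` of the sum survive, so skew
symmetry reduces to `u₀a = -a₀u` and `u₀v = -v₀u + ∂(v₁u)` for `k = 0`, and to
`u₁v = v₁u` for `k = 1`. -/

lemma Finset.sum_range_add_two_eq_of_eq_zero {M : Type*} [AddCommMonoid M] {f : ℕ → M}
    (hf : ∀ r, 2 ≤ r → f r = 0) (N : ℕ) : ∑ r ∈ Finset.range (N + 2), f r = f 0 + f 1 := by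
  rw [← Finset.sum_subset (Finset.range_subset_range.2 (by omega : 2 ≤ N + 2))
    (fun r _ hr => hf r (by simp at hr; omega)), Finset.sum_range_succ, Finset.sum_range_one]

lemma genQ_zero {C0 C1 : Type} [AddCommGroup C0] [AddCommGroup C1] :
    genQ (0 : C0 × C1) = (0 : QC C0 C1) := by
  simp [genQ, Prod.ext_iff]

section SkewSymmetry

variable {C0 C1 : Type} [AddCommGroup C0] [Module ℂ C0] [AddCommGroup C1] [Module ℂ C1]
  (T : OneTruncData C0 C1)

lemma uopv_eq_zero_of_two_le {n : ℕ} (hn : 2 ≤ n) (p q : C0 × C1) : uopv T n p q = 0 := by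
  obtain ⟨m, rfl⟩ := Nat.exists_eq_add_of_le' hn
  rfl

lemma embQ_zero (n : ℕ) : embQ T n (0 : C0) = 0 := by
  cases n <;> simp [embQ, Prod.ext_iff]

lemma DQ_zero : DQ T (0 : QC C0 C1) = 0 := by
  simp [DQ, Prod.ext_iff]

lemma DQ_iterate_zero (r : ℕ) : (DQ T)^[r] (0 : QC C0 C1) = 0 :=
  Function.iterate_fixed (DQ_zero T) r

lemma DQ_genQ_uopv_one (p q : C0 × C1) :
    DQ T (genQ (uopv T 1 p q)) = (0, Finsupp.single 0 (T.d (T.pr p.2 q.2))) := by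
  simp [DQ, genQ, uopv]

lemma opQ_genQ (k : ℕ) (p q : C0 × C1) :
    opQ T k p (genQ q) =
      if k = 0 then (T.γ p.2 q.1 + T.β p.1 q.2, Finsupp.single 0 (T.br p.2 q.2))
      else if k = 1 then (T.pr p.2 q.2, 0) else 0 := by
  rw [opQ, genQ, Finsupp.sum_single_index (by simp [embQ_zero, embQB, Prod.ext_iff])]
  rcases k with _ | _ | m
  · simp [embQ, embQB]
  · simp [embQ]
  · have hlt : ¬ m + 2 ≤ 0 + 1 := by omega
    simp [hlt]

lemma opQ_zero_genQ_eq_skew (hγ : ∀ u a, T.γ u a = -T.β a u)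
    (hbr : ∀ u v, T.br u v = -T.br v u + T.d (T.pr v u)) (p q : C0 × C1) :
    opQ T 0 p (genQ q) = -genQ (uopv T 0 q p) + DQ T (genQ (uopv T 1 q p)) := by
  rw [opQ_genQ, DQ_genQ_uopv_one, if_pos rfl]
  refine Prod.ext ?_ ?_
  · simp only [genQ, uopv, Prod.fst_add, Prod.fst_neg, hγ]
    abel
  · simp only [genQ, uopv, Prod.snd_add, Prod.snd_neg, hbr p.2 q.2, Finsupp.single_add,
      Finsupp.single_neg]

lemma opQ_one_genQ_eq_skew (hpr : ∀ u v, T.pr u v = T.pr v u) (p q : C0 × C1) :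
    opQ T 1 p (genQ q) = genQ (uopv T 1 q p) := by
  rw [opQ_genQ]
  simp [genQ, uopv, hpr p.2 q.2]

end SkewSymmetry

/-- In the quotient `𝒞 = C(𝔸⊕𝔹)/∂̂C(𝔸)`, skew symmetry
`Y⁰₋(u,x)v = Sing(e^{xD} Y⁰₋(v,-x)u)` holds for generators `u, v ∈ 𝔸⊕𝔹`; in
components, `uₖv = ∑ᵣ (-1)^{k+r+1} (1/r!) Dʳ(v_{k+r} u)` (the sum is finite since
`v_j u = 0` for `j ≥ 2`, so any truncation at `N + 2 ≥ 2` terms computes it). -/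
theorem stmt14 {C0 C1 : Type} [AddCommGroup C0] [Module ℂ C0]
    [AddCommGroup C1] [Module ℂ C1]
    (T : OneTruncData C0 C1) (hT : IsOneTruncated T)
    (p q : C0 × C1) (k N : ℕ) :
    opQ T k p (genQ q) =
      ∑ r ∈ Finset.range (N + 2),
        ((-1 : ℂ) ^ (k + r + 1) * ((r.factorial : ℂ))⁻¹) •
          (DQ T)^[r] (genQ (uopv T (k + r) q p)) := by
  obtain ⟨-, -, -, -, hγ, hbr, hpr, -⟩ := hT
  have hvanish : ∀ n, 2 ≤ n → genQ (uopv T n q p) = 0 := fun n hn => by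
    rw [uopv_eq_zero_of_two_le T hn, genQ_zero]
  rw [Finset.sum_range_add_two_eq_of_eq_zero
    (fun r hr => by simp [hvanish (k + r) (by omega), DQ_iterate_zero])]
  rcases k with _ | _ | m
  · simp [opQ_zero_genQ_eq_skew T hγ hbr]
  · simp [opQ_one_genQ_eq_skew T hpr, hvanish 2 le_rfl, DQ_zero]
  · simp (disch := omega) [opQ_genQ, hvanish, DQ_zero]
end
end

section
/- Let (𝔸 ⊕ 𝔹, ∂) be a 1-truncated conformal algebra. In the quotient 𝒞 = C(𝔸⊕𝔹)/∂̂C(𝔸), the half commutator formula holds on generators: for u, v, w ∈ 𝔸 ⊕ 𝔹, Y^0_-(u,x₁)Y^0_-(v,x₂)w − Y^0_-(v,x₂)Y^0_-(u,x₁)w = Sing(Y^0_-(Y^0_-(u,x₁−x₂)v, x₂)w). -/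
open scoped BigOperators

noncomputable section

/-!
On a generator `genQ r`, only the components `p₀` and `p₁` of a generator `p` act nontrivially,
and each sends a generator-shaped element `(c, single 0 b)` to another one (`p₁` to one with no
`𝔹`-part, on which only `p₀` survives). Hence both sides of the commutator formula vanish as soon
as `m + k ≥ 2`, and the three remaining cases `(m, k) = (0,0), (0,1), (1,0)` are, coordinatewise,
exactly the associativity, commutativity and `(∂a)₁ = -a₀` axioms of a 1-truncated conformal algebra.
-/

namespace OneTruncData

lemma genQ_eq_mk {C0 C1 : Type} [AddCommGroup C1] (r : C0 × C1) :
    genQ r = ((r.1, Finsupp.single 0 r.2) : QC C0 C1) := rfl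

variable {C0 C1 : Type} [AddCommGroup C0] [Module ℂ C0] [AddCommGroup C1] [Module ℂ C1]
  (T : OneTruncData C0 C1)

lemma opQ_zero_mk_single (p : C0 × C1) (c : C0) (b : C1) :
    opQ T 0 p ((c, Finsupp.single 0 b) : QC C0 C1)
      = (T.γ p.2 c + T.β p.1 b, Finsupp.single 0 (T.br p.2 b)) := by
  rw [opQ, Finsupp.sum_single_index] <;> simp [embQ, embQB]

lemma opQ_one_mk_single (p : C0 × C1) (c : C0) (b : C1) :
    opQ T 1 p ((c, Finsupp.single 0 b) : QC C0 C1) = (T.pr p.2 b, 0) := by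
  rw [opQ, Finsupp.sum_single_index] <;> simp [embQ]

lemma opQ_mk_single_of_two_le {j : ℕ} (hj : 2 ≤ j) (p : C0 × C1) (c : C0) (b : C1) :
    opQ T j p ((c, Finsupp.single 0 b) : QC C0 C1) = 0 := by
  obtain ⟨n, rfl⟩ : ∃ n, j = n + 2 := ⟨j - 2, by omega⟩
  rw [opQ, Finsupp.sum_single_index] <;> simp

lemma opQ_zero_mk_zero (p : C0 × C1) (c : C0) :
    opQ T 0 p ((c, 0) : QC C0 C1) = (T.γ p.2 c, 0) := by
  simpa using opQ_zero_mk_single T p c 0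

lemma opQ_mk_zero_of_one_le {j : ℕ} (hj : 1 ≤ j) (p : C0 × C1) (c : C0) :
    opQ T j p ((c, 0) : QC C0 C1) = 0 := by
  obtain rfl | hj := eq_or_lt_of_le hj
  · simpa [Prod.mk_zero_zero] using opQ_one_mk_single T p c 0
  · simpa using opQ_mk_single_of_two_le T hj p c 0

lemma opQ_mk_zero_mk_single_of_one_le {j : ℕ} (hj : 1 ≤ j) (a c : C0) (b : C1) :
    opQ T j (a, 0) ((c, Finsupp.single 0 b) : QC C0 C1) = 0 := by
  obtain rfl | hj := eq_or_lt_of_le hj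
  · simp [opQ_one_mk_single]
  · exact opQ_mk_single_of_two_le T hj _ c b

lemma opQ_apply_zero (j : ℕ) (p : C0 × C1) : opQ T j p 0 = 0 := by
  rcases j with _ | j
  · simpa [Prod.mk_zero_zero] using opQ_zero_mk_zero T p 0
  · exact opQ_mk_zero_of_one_le T (Nat.succ_pos j) p 0

lemma opQ_zero_left (j : ℕ) (x : QC C0 C1) : opQ T j 0 x = 0 := by
  have hembQ : ∀ n, embQ T n (0 : C0) = 0 := by rintro (_ | n) <;> simp [embQ]
  simp [opQ, hembQ, embQB, Prod.mk_zero_zero]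

lemma opQ_opQ_genQ_of_two_le {m k : ℕ} (hmk : 2 ≤ m + k) (p q r : C0 × C1) :
    opQ T m p (opQ T k q (genQ r)) = 0 := by
  rcases k with _ | _ | k
  · rw [genQ_eq_mk, opQ_zero_mk_single, opQ_mk_single_of_two_le T (by omega)]
  · rw [genQ_eq_mk, opQ_one_mk_single, opQ_mk_zero_of_one_le T (by omega)]
  · rw [genQ_eq_mk, opQ_mk_single_of_two_le T (by omega), opQ_apply_zero]

lemma sum_opQ_uopv_genQ_of_two_le {m k : ℕ} (hmk : 2 ≤ m + k) (p q r : C0 × C1) :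
    ∑ i ∈ Finset.range (m + 1), (m.choose i : ℂ) • opQ T (m + k - i) (uopv T i p q) (genQ r)
      = 0 := by
  refine Finset.sum_eq_zero fun i _ => ?_
  rcases i with _ | _ | i
  · rw [genQ_eq_mk, opQ_mk_single_of_two_le T (by omega), smul_zero]
  · rw [show uopv T 1 p q = (T.pr p.2 q.2, 0) from rfl, genQ_eq_mk,
      opQ_mk_zero_mk_single_of_one_le T (by omega), smul_zero]
  · rw [show uopv T (i + 2) p q = 0 from rfl, opQ_zero_left, smul_zero]

variable {T}

lemma opQ_zero_opQ_zero_sub (hT : IsOneTruncated T) (p q r : C0 × C1) :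
    opQ T 0 p (opQ T 0 q (genQ r)) - opQ T 0 q (opQ T 0 p (genQ r))
      = opQ T 0 (uopv T 0 p q) (genQ r) := by
  obtain ⟨-, -, -, -, -, -, -, hbr, hγγ, hγβ, hβbr, -⟩ := hT
  simp only [genQ_eq_mk, opQ_zero_mk_single, uopv, Prod.mk_sub_mk, ← Finsupp.single_sub,
    map_add, LinearMap.add_apply]
  rw [hγγ p.2 q.2 r.1, hγβ p.2 q.1 r.2, hβbr p.1 q.2 r.2, hbr p.2 q.2 r.2]
  congr 2 <;> abel

lemma opQ_zero_opQ_one_sub (hT : IsOneTruncated T) (p q r : C0 × C1) :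
    opQ T 0 p (opQ T 1 q (genQ r)) - opQ T 1 q (opQ T 0 p (genQ r))
      = opQ T 1 (uopv T 0 p q) (genQ r) := by
  obtain ⟨-, -, -, -, -, -, -, -, -, -, -, hγpr⟩ := hT
  simp only [genQ_eq_mk, opQ_zero_mk_single, opQ_one_mk_single, opQ_zero_mk_zero, uopv,
    Prod.mk_sub_mk, hγpr, sub_zero]
  congr 1
  abel

lemma opQ_one_opQ_zero_sub (hT : IsOneTruncated T) (p q r : C0 × C1) :
    opQ T 1 p (opQ T 0 q (genQ r)) - opQ T 0 q (opQ T 1 p (genQ r))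
      = opQ T 1 (uopv T 0 p q) (genQ r) + opQ T 0 (uopv T 1 p q) (genQ r) := by
  obtain ⟨-, -, hprd, -, -, hbr, hpr, -, -, -, -, hγpr⟩ := hT
  simp only [genQ_eq_mk, opQ_zero_mk_single, opQ_one_mk_single, opQ_zero_mk_zero, uopv,
    Prod.mk_sub_mk, Prod.mk_add_mk, hγpr, hbr p.2 q.2, map_add, map_neg, LinearMap.add_apply,
    LinearMap.neg_apply, hprd, hpr q.2 p.2, Finsupp.single_zero, map_zero, LinearMap.zero_apply]
  congr 1 <;> abel

end OneTruncData

open OneTruncData in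
/-- In the quotient `𝒞 = C(𝔸⊕𝔹)/∂̂C(𝔸)`, the half commutator formula holds on
generators `u, v, w ∈ 𝔸⊕𝔹`; in components,
`uₘ(vₖw) - vₖ(uₘw) = ∑_{i=0}^{m} (m choose i) (uᵢv)_{m+k-i} w`. -/
theorem stmt15 {C0 C1 : Type} [AddCommGroup C0] [Module ℂ C0]
    [AddCommGroup C1] [Module ℂ C1]
    (T : OneTruncData C0 C1) (hT : IsOneTruncated T)
    (p q r : C0 × C1) (m k : ℕ) :
    opQ T m p (opQ T k q (genQ r)) - opQ T k q (opQ T m p (genQ r))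
      = ∑ i ∈ Finset.range (m + 1),
          ((m.choose i : ℂ)) • opQ T (m + k - i) (uopv T i p q) (genQ r) := by
  by_cases hmk : 2 ≤ m + k
  · rw [opQ_opQ_genQ_of_two_le T hmk, opQ_opQ_genQ_of_two_le T (by omega),
      sum_opQ_uopv_genQ_of_two_le T hmk, sub_zero]
  obtain ⟨rfl, rfl⟩ | ⟨rfl, rfl⟩ | ⟨rfl, rfl⟩ :
      (m = 0 ∧ k = 0) ∨ (m = 0 ∧ k = 1) ∨ (m = 1 ∧ k = 0) := by omega
  · simpa using opQ_zero_opQ_zero_sub hT p q r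
  · simpa using opQ_zero_opQ_one_sub hT p q r
  · simpa [Finset.sum_range_succ] using opQ_one_opQ_zero_sub hT p q r
end
end

section
/- Let B be a Courant A-algebroid, 𝒞 the vertex Lie algebra built from the 1-truncated conformal algebra A ⊕ B, and S(𝒞) the associated ℕ-graded vertex Poisson algebra. Let E_0 = span{e − 1, a·a' − aa' : a, a' ∈ A} ⊆ S(𝒞)_{(0)} and E_1 = span{a·b − ab : a ∈ A, b ∈ B} ⊆ S(𝒞)_{(1)}, where · is the symmetric algebra product and juxtaposition denotes the A-algebra/A-module products, e is the identity of A and 1 the identity of S(𝒞). Then for all u ∈ A ⊕ B and n ∈ ℕ, u_n(E_0 ⊕ E_1) ⊆ E_0 ⊕ E_1, and D E_0 ⊆ E_1. -/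
open scoped BigOperators

noncomputable section

section Courant

variable {A B : Type} [CommRing A] [Algebra ℂ A] [AddCommGroup B] [Module ℂ B]
  [Module A B] [IsScalarTower ℂ A B]

/-- The axioms of a Courant `A`-algebroid on the `A`-module `B`, with Leibniz bracket
`br`, anchor `anch : B → Der(A)` (a homomorphism of Leibniz `A`-algebras),
symmetric `A`-bilinear pairing `pr`, and derivation `d : A → B` with `anch ∘ d = 0`. -/
def IsCourant (br : B →ₗ[ℂ] B →ₗ[ℂ] B) (anch : B →ₗ[ℂ] A →ₗ[ℂ] A)
    (pr : B →ₗ[ℂ] B →ₗ[ℂ] A) (d : A →ₗ[ℂ] B) : Prop :=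
  (∀ u v w : B, br u (br v w) = br (br u v) w + br v (br u w)) ∧
  (∀ (u : B) (a a' : A), anch u (a * a') = a * anch u a' + a' * anch u a) ∧
  (∀ (a : A) (u : B) (a' : A), anch (a • u) a' = a * anch u a') ∧
  (∀ (u v : B) (a : A), anch (br u v) a = anch u (anch v a) - anch v (anch u a)) ∧
  (∀ (a : A) (u v : B), pr (a • u) v = a * pr u v) ∧
  (∀ u v : B, pr u v = pr v u) ∧
  (∀ a a' : A, d (a * a') = a • d a' + a' • d a) ∧
  (∀ a a' : A, anch (d a) a' = 0) ∧
  (∀ (u : B) (a : A) (v : B), br u (a • v) = a • br u v + (anch u a) • v) ∧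
  (∀ u v w : B, pr (br u v) w + pr v (br u w) = anch u (pr v w)) ∧
  (∀ (u : B) (a : A), br u (d a) = d (anch u a)) ∧
  (∀ (u : B) (a : A), pr u (d a) = anch u a) ∧
  (∀ u v : B, br u v + br v u = d (pr u v))

end Courant

section CourantTrunc

variable {A B : Type} [CommRing A] [Algebra ℂ A] [AddCommGroup B] [Module ℂ B]
  [Module A B] [IsScalarTower ℂ A B]

/-- The 1-truncated conformal algebra `A ⊕ B` associated with a Courant `A`-algebroid
`B`: `u₀v = [u,v]`, `u₁v = ⟨u,v⟩`, `u₀a = π(u)(a)`, `a₀u = -u₀a`, `aᵢa' = 0`. -/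
def courantTrunc (br : B →ₗ[ℂ] B →ₗ[ℂ] B) (anch : B →ₗ[ℂ] A →ₗ[ℂ] A)
    (pr : B →ₗ[ℂ] B →ₗ[ℂ] A) (d : A →ₗ[ℂ] B) : OneTruncData A B :=
  { d := d, β := - (LinearMap.flip anch), γ := anch, br := br, pr := pr }

end CourantTrunc

/-! The operations `uₙ` and `D` act on `S(𝒞)` as derivations, so by the Leibniz rule they send
a relation `x·y - xy` to `(u x)·y + x·(u y) - u(xy)`. On generators of `A ⊕ B` they take values
in `A ⊕ B`, and the compatibilities of the Courant algebroid with the `A`-module structure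
(`u₀` is a derivation of `A`, `u₀(av) = a(u₀v) + (u₀a)v`, `(av)₀a' = a(v₀a')`,
`u₁(av) = a(u₁v)`, and `∂` is a derivation) expand `u(xy)` so that the result regroups into a
sum of relations. As everything is linear, it suffices to check this on the spanning relations.
-/

section Relations

variable (R : Type*) {A B S : Type*} [CommRing R] [CommRing A] [AddCommGroup B] [Module A B]
  [CommRing S] [Algebra R S]

def mulRelations (ιA : A → S) : Submodule R S :=
  Submodule.span R (insert (ιA 1 - 1) {x : S | ∃ a a' : A, x = ιA a * ιA a' - ιA (a * a')})

def smulRelations (ιA : A → S) (ιB : B → S) : Submodule R S :=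
  Submodule.span R {x : S | ∃ (a : A) (b : B), x = ιA a * ιB b - ιB (a • b)}

variable {R}

theorem map_one_eq_zero_of_leibniz {M : Type*} [AddCommGroup M] [Module A M] {f : A → M}
    (hf : ∀ a a', f (a * a') = a • f a' + a' • f a) : f 1 = 0 := by
  simpa only [mul_one, one_smul, left_eq_add] using hf 1 1

theorem mulRelations_le_comap_smulRelations (D : Derivation R S S) (ιA : A →+ S)
    (ιB : B →+ S) {δ : A → B} (hδ : ∀ a a', δ (a * a') = a • δ a' + a' • δ a)
    (hD : ∀ a, D (ιA a) = ιB (δ a)) :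
    mulRelations R ιA ≤ (smulRelations R ιA ιB).comap (D : S →ₗ[R] S) := by
  have mem : ∀ a b, ιA a * ιB b - ιB (a • b) ∈ smulRelations R ιA ιB :=
    fun a b => Submodule.subset_span ⟨a, b, rfl⟩
  refine Submodule.span_le.mpr (Set.insert_subset ?_ ?_)
  · simp [hD, map_one_eq_zero_of_leibniz hδ]
  · rintro _ ⟨a, a', rfl⟩
    have key : D (ιA a * ιA a' - ιA (a * a'))
        = (ιA a * ιB (δ a') - ιB (a • δ a'))
          + (ιA a' * ιB (δ a) - ιB (a' • δ a)) := by
      rw [map_sub, D.leibniz, hD, hD, hD, hδ, map_add, smul_eq_mul, smul_eq_mul]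
      ring
    simpa only [SetLike.mem_coe, Submodule.mem_comap, Derivation.coeFn_coe, key]
      using add_mem (mem _ _) (mem _ _)

theorem mulRelations_le_comap_mulRelations (D : Derivation R S S) (ιA : A →+ S) {φ : A → A}
    (hφ : ∀ a a', φ (a * a') = a * φ a' + a' * φ a) (hA : ∀ a, D (ιA a) = ιA (φ a)) :
    mulRelations R ιA ≤ (mulRelations R ιA).comap (D : S →ₗ[R] S) := by
  have mem : ∀ a a', ιA a * ιA a' - ιA (a * a') ∈ mulRelations R ιA :=
    fun a a' => Submodule.subset_span (Set.mem_insert_of_mem _ ⟨a, a', rfl⟩)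
  refine Submodule.span_le.mpr (Set.insert_subset ?_ ?_)
  · simp [hA, map_one_eq_zero_of_leibniz (f := φ) hφ]
  · rintro _ ⟨a, a', rfl⟩
    have key : D (ιA a * ιA a' - ιA (a * a'))
        = (ιA a * ιA (φ a') - ιA (a * φ a')) + (ιA a' * ιA (φ a) - ιA (a' * φ a)) := by
      rw [map_sub, D.leibniz, hA, hA, hA, hφ, map_add, smul_eq_mul, smul_eq_mul]
      ring
    simpa only [SetLike.mem_coe, Submodule.mem_comap, Derivation.coeFn_coe, key]
      using add_mem (mem _ _) (mem _ _)

theorem smulRelations_le_comap_mulRelations_sup (D : Derivation R S S) (ιA : A →+ S)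
    (ιB : B →+ S) {φ : A → A} {ψ : B → A} {χ : B → B}
    (hψ : ∀ a b, ψ (a • b) = a * ψ b) (hχ : ∀ a b, χ (a • b) = a • χ b + φ a • b)
    (hA : ∀ a, D (ιA a) = ιA (φ a)) (hB : ∀ b, D (ιB b) = ιA (ψ b) + ιB (χ b)) :
    smulRelations R ιA ιB
      ≤ (mulRelations R ιA ⊔ smulRelations R ιA ιB).comap (D : S →ₗ[R] S) := by
  refine Submodule.span_le.mpr ?_
  rintro _ ⟨a, b, rfl⟩
  have key : D (ιA a * ιB b - ιB (a • b))
      = (ιA a * ιA (ψ b) - ιA (a * ψ b))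
        + ((ιA a * ιB (χ b) - ιB (a • χ b)) + (ιA (φ a) * ιB b - ιB (φ a • b))) := by
    rw [map_sub, D.leibniz, hA, hB, hB, hψ, hχ, map_add, smul_eq_mul, smul_eq_mul]
    ring
  have hmul : ιA a * ιA (ψ b) - ιA (a * ψ b) ∈ mulRelations R ιA :=
    Submodule.subset_span (Set.mem_insert_of_mem _ ⟨_, _, rfl⟩)
  have hsmul : ∀ a b, ιA a * ιB b - ιB (a • b) ∈ smulRelations R ιA ιB :=
    fun a b => Submodule.subset_span ⟨a, b, rfl⟩
  simpa only [SetLike.mem_coe, Submodule.mem_comap, Derivation.coeFn_coe, key]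
    using add_mem (Submodule.mem_sup_left hmul)
      (Submodule.mem_sup_right (add_mem (hsmul _ _) (hsmul _ _)))

theorem mulRelations_sup_smulRelations_le_comap (D : Derivation R S S) (ιA : A →+ S)
    (ιB : B →+ S) {φ : A → A} {ψ : B → A} {χ : B → B}
    (hφ : ∀ a a', φ (a * a') = a * φ a' + a' * φ a)
    (hψ : ∀ a b, ψ (a • b) = a * ψ b) (hχ : ∀ a b, χ (a • b) = a • χ b + φ a • b)
    (hA : ∀ a, D (ιA a) = ιA (φ a)) (hB : ∀ b, D (ιB b) = ιA (ψ b) + ιB (χ b)) :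
    mulRelations R ιA ⊔ smulRelations R ιA ιB
      ≤ (mulRelations R ιA ⊔ smulRelations R ιA ιB).comap (D : S →ₗ[R] S) :=
  sup_le
    ((mulRelations_le_comap_mulRelations D ιA hφ hA).trans (Submodule.comap_mono le_sup_left))
    (smulRelations_le_comap_mulRelations_sup D ιA ιB hψ hχ hA hB)

end Relations

section QuotientModel

variable {C0 C1 : Type} [AddCommGroup C0] [Module ℂ C0] [AddCommGroup C1] [Module ℂ C1]

theorem opQ_genQ_s18 (T : OneTruncData C0 C1) (n : ℕ) (p q : C0 × C1) :
    opQ T n p (genQ q) = genQ (uopv T n p q) := by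
  rcases n with _ | _ | n <;>
    simp [opQ, genQ, uopv, embQ, embQB, Finsupp.sum_single_index, Prod.ext_iff, add_comm]

theorem uopv_inl_snd (T : OneTruncData C0 C1) (n : ℕ) (p : C0 × C1) (a : C0) :
    (uopv T n p (a, 0)).2 = 0 := by
  rcases n with _ | _ | n <;> simp [uopv]

theorem DQ_inl (T : OneTruncData C0 C1) (a : C0) :
    DQ T ((a, 0) : QC C0 C1) = (0, Finsupp.single 0 (T.d a)) := by
  simp [DQ]

end QuotientModel

section Courant

variable {A B : Type} [CommRing A] [Algebra ℂ A] [AddCommGroup B] [Module ℂ B]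
  [Module A B] {br : B →ₗ[ℂ] B →ₗ[ℂ] B} {anch : B →ₗ[ℂ] A →ₗ[ℂ] A}
  {pr : B →ₗ[ℂ] B →ₗ[ℂ] A} {d : A →ₗ[ℂ] B}

theorem IsCourant.uopv_inl_mul (hC : IsCourant br anch pr d) (n : ℕ) (p : A × B) (a a' : A) :
    (uopv (courantTrunc br anch pr d) n p (a * a', 0)).1
      = a * (uopv (courantTrunc br anch pr d) n p (a', 0)).1
        + a' * (uopv (courantTrunc br anch pr d) n p (a, 0)).1 := by
  obtain ⟨-, hanch_mul, -⟩ := hC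
  rcases n with _ | _ | n <;> simp [uopv, courantTrunc, hanch_mul]

theorem IsCourant.uopv_inr_smul_fst (hC : IsCourant br anch pr d) (n : ℕ) (p : A × B) (a : A)
    (b : B) :
    (uopv (courantTrunc br anch pr d) n p (0, a • b)).1
      = a * (uopv (courantTrunc br anch pr d) n p (0, b)).1 := by
  obtain ⟨-, -, hanch_smul, -, hpr_smul, hpr_comm, -⟩ := hC
  rcases n with _ | _ | n
  · simp [uopv, courantTrunc, hanch_smul]
  · simp [uopv, courantTrunc, hpr_comm p.2, hpr_smul]
  · simp [uopv]

theorem IsCourant.uopv_inr_smul_snd (hC : IsCourant br anch pr d) (n : ℕ) (p : A × B) (a : A)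
    (b : B) :
    (uopv (courantTrunc br anch pr d) n p (0, a • b)).2
      = a • (uopv (courantTrunc br anch pr d) n p (0, b)).2
        + (uopv (courantTrunc br anch pr d) n p (a, 0)).1 • b := by
  obtain ⟨-, -, -, -, -, -, -, -, hbr_smul, -⟩ := hC
  rcases n with _ | _ | n <;> simp [uopv, courantTrunc, hbr_smul]

end Courant

theorem stmt18_general {A B : Type} [CommRing A] [Algebra ℂ A] [AddCommGroup B] [Module ℂ B]
    [Module A B]
    (br : B →ₗ[ℂ] B →ₗ[ℂ] B) (anch : B →ₗ[ℂ] A →ₗ[ℂ] A)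
    (pr : B →ₗ[ℂ] B →ₗ[ℂ] A) (d : A →ₗ[ℂ] B)
    (hC : IsCourant br anch pr d)
    (S : Type) [CommRing S] [Algebra ℂ S]
    (ι : QC A B →ₗ[ℂ] S)
    (DS : S →ₗ[ℂ] S)
    (hDSder : ∀ x y : S, DS (x * y) = x * DS y + y * DS x)
    (hDSι : ∀ x : QC A B, DS (ι x) = ι (DQ (courantTrunc br anch pr d) x))
    (opS : ℕ → S →ₗ[ℂ] S →ₗ[ℂ] S)
    (hder : ∀ (n : ℕ) (s x y : S), opS n s (x * y) = opS n s x * y + x * opS n s y)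
    (hgen : ∀ (n : ℕ) (p : A × B) (x : QC A B),
      opS n (ι (genQ p)) (ι x) = ι (opQ (courantTrunc br anch pr d) n p x))
    (ιA : A → S) (hιA : ∀ a : A, ιA a = ι ((a, 0) : QC A B))
    (ιB : B → S) (hιB : ∀ b : B, ιB b = ι ((0, Finsupp.single 0 b) : QC A B))
    (E0 E1 : Submodule ℂ S)
    (hE0 : E0 = Submodule.span ℂ
      (insert (ιA 1 - 1) {x : S | ∃ a a' : A, x = ιA a * ιA a' - ιA (a * a')}))
    (hE1 : E1 = Submodule.span ℂ
      {x : S | ∃ (a : A) (b : B), x = ιA a * ιB b - ιB (a • b)}) :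
    (∀ (p : A × B) (n : ℕ), ∀ x ∈ E0 ⊔ E1, opS n (ι (genQ p)) x ∈ E0 ⊔ E1) ∧
    (∀ x ∈ E0, DS x ∈ E1) := by
  set T := courantTrunc br anch pr d
  let jA : A →+ S := AddMonoidHom.mk' ιA fun a a' => by
    simp only [hιA, ← map_add, Prod.mk_add_mk, add_zero]
  let jB : B →+ S := AddMonoidHom.mk' ιB fun b b' => by
    simp only [hιB, ← map_add, Prod.mk_add_mk, add_zero, Finsupp.single_add]
  have hι_genQ (q : A × B) : ι (genQ q) = jA q.1 + jB q.2 := by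
    simp [jA, jB, hιA, hιB, ← map_add, genQ]
  have hE0' : E0 = mulRelations ℂ jA := hE0
  have hE1' : E1 = smulRelations ℂ jA jB := hE1
  subst hE0' hE1'
  refine ⟨fun p n x hx => ?_, fun x hx => ?_⟩
  · have hA (a : A) : opS n (ι (genQ p)) (jA a) = jA (uopv T n p (a, 0)).1 := by
      simpa [hι_genQ, opQ_genQ_s18, uopv_inl_snd] using hgen n p (genQ (a, 0))
    have hB (b : B) : opS n (ι (genQ p)) (jB b)
        = jA (uopv T n p (0, b)).1 + jB (uopv T n p (0, b)).2 := by
      simpa [hι_genQ, opQ_genQ_s18] using hgen n p (genQ (0, b))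
    let δ : Derivation ℂ S S := Derivation.mk' (opS n (ι (genQ p))) fun x y => by
      rw [hder, smul_eq_mul, smul_eq_mul]; ring
    exact mulRelations_sup_smulRelations_le_comap δ jA jB (hC.uopv_inl_mul n p)
      (hC.uopv_inr_smul_fst n p) (hC.uopv_inr_smul_snd n p) hA hB hx
  · have hd_mul : ∀ a a' : A, d (a * a') = a • d a' + a' • d a := hC.2.2.2.2.2.2.1
    have hD (a : A) : DS (jA a) = jB (d a) := by
      show DS (ιA a) = ιB (d a)
      rw [hιA, hιB, hDSι, DQ_inl]
      rfl
    exact mulRelations_le_comap_smulRelations (Derivation.mk' DS hDSder) jA jB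
      hd_mul hD hx

/-- Let `B` be a Courant `A`-algebroid, `𝒞` the associated vertex Lie algebra, and
`S = S(𝒞)` the associated symmetric algebra carrying the induced `ℕ`-graded vertex
Poisson structure (the products `opS n` are derivations extending the operations of
`𝒞`, and `DS` is the derivation extending `D`). With
`E₀ = span{e - 1, a·a' - aa'}` and `E₁ = span{a·b - ab}`, one has
`uₙ(E₀ ⊕ E₁) ⊆ E₀ ⊕ E₁` for every generator `u ∈ A ⊕ B` and `n ∈ ℕ`, and
`D E₀ ⊆ E₁`. -/
theorem stmt18 {A B : Type} [CommRing A] [Algebra ℂ A] [AddCommGroup B] [Module ℂ B]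
    [Module A B] [IsScalarTower ℂ A B]
    (br : B →ₗ[ℂ] B →ₗ[ℂ] B) (anch : B →ₗ[ℂ] A →ₗ[ℂ] A)
    (pr : B →ₗ[ℂ] B →ₗ[ℂ] A) (d : A →ₗ[ℂ] B)
    (hC : IsCourant br anch pr d)
    (S : Type) [CommRing S] [Algebra ℂ S]
    (ι : QC A B →ₗ[ℂ] S)
    (hUniv : ∀ (T' : Type) [CommRing T'] [Algebra ℂ T'] (f : QC A B →ₗ[ℂ] T'),
      ∃! g : S →ₐ[ℂ] T', ∀ x, g (ι x) = f x)
    (DS : S →ₗ[ℂ] S)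
    (hDSder : ∀ x y : S, DS (x * y) = x * DS y + y * DS x)
    (hDSι : ∀ x : QC A B, DS (ι x) = ι (DQ (courantTrunc br anch pr d) x))
    (opS : ℕ → S →ₗ[ℂ] S →ₗ[ℂ] S)
    (hder : ∀ (n : ℕ) (s x y : S), opS n s (x * y) = opS n s x * y + x * opS n s y)
    (hgen : ∀ (n : ℕ) (p : A × B) (x : QC A B),
      opS n (ι (genQ p)) (ι x) = ι (opQ (courantTrunc br anch pr d) n p x))
    (ιA : A → S) (hιA : ∀ a : A, ιA a = ι ((a, 0) : QC A B))
    (ιB : B → S) (hιB : ∀ b : B, ιB b = ι ((0, Finsupp.single 0 b) : QC A B))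
    (E0 E1 : Submodule ℂ S)
    (hE0 : E0 = Submodule.span ℂ
      (insert (ιA 1 - 1) {x : S | ∃ a a' : A, x = ιA a * ιA a' - ιA (a * a')}))
    (hE1 : E1 = Submodule.span ℂ
      {x : S | ∃ (a : A) (b : B), x = ιA a * ιB b - ιB (a • b)}) :
    (∀ (p : A × B) (n : ℕ), ∀ x ∈ E0 ⊔ E1, opS n (ι (genQ p)) x ∈ E0 ⊔ E1) ∧
    (∀ x ∈ E0, DS x ∈ E1) :=
  stmt18_general br anch pr d hC S ι DS hDSder hDSι opS hder hgen ιA hιA ιB hιB E0 E1 hE0 hE1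
end
end

section
/- Let B be a Courant A-algebroid, S(𝒞) the associated ℕ-graded vertex Poisson algebra, and I_B = S(𝒞)·ℂ[D](E) where E = E_0 ⊕ E_1 with E_0 = span{e−1, a·a'−aa'} and E_1 = span{a·b−ab}. Then I_B is an ideal of the vertex Poisson algebra S(𝒞); moreover S(𝒞)_{(0)} = (I_B)_{(0)} ⊕ A and S(𝒞)_{(1)} = (I_B)_{(1)} ⊕ B, so the quotient S(𝒞)/I_B is an ℕ-graded vertex Poisson algebra with degree-zero subspace A and degree-one subspace B. -/
/-!
`I_B` is `D`-stable because `D` is a derivation. Skew-symmetry expresses `aₙ b` through the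
`D`-iterates of the `b_m a`, so modulo the `D`-stable ideal `I_B` the two arguments can be
swapped. With the Leibniz rule and `(Da)ₙ = -n aₙ₋₁` this reduces closure under the `aₙ` to the
action of the generators `a + b ∈ A ⊕ B` on the relations spanning `E`, and the Courant axioms
show that these actions land back in `span E`.

Modulo `I_B`, every element of `S₍₀₎` (resp. `S₍₁₎`) is congruent to some `a ∈ A` (resp.
`b ∈ B`), by rewriting products with the relations. Uniqueness comes from the algebra map from
`S` to the trivial square-zero extension `A ⊕ B` that kills `Dⁿ b` for `n > 0`: it intertwines
`D` with `d`, hence kills `I_B`, and it is injective on `A` and on `B`.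
-/

open scoped BigOperators

noncomputable section

/-- The vertex Lie algebra axioms, in component form, for data `(R, d, op)`. -/
def IsVertexLieData {R : Type} [AddCommGroup R] [Module ℂ R]
    (d : R →ₗ[ℂ] R) (op : ℕ → R →ₗ[ℂ] R →ₗ[ℂ] R) : Prop :=
  (∀ a b : R, ∃ N : ℕ, ∀ n ≥ N, op n a b = 0) ∧
  (∀ a b : R, op 0 (d a) b = 0) ∧
  (∀ (a b : R) (n : ℕ), op (n + 1) (d a) b = (-(n + 1 : ℂ)) • op n a b) ∧
  (∀ (a b : R) (n N : ℕ), (∀ i ≥ N, op (n + i) b a = 0) →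
    op n a b = ∑ i ∈ Finset.range N,
      ((-1 : ℂ) ^ (n + i + 1) * ((Nat.factorial i : ℂ))⁻¹) • (⇑d)^[i] (op (n + i) b a)) ∧
  (∀ (a b c : R) (m n : ℕ),
    op m a (op n b c) - op n b (op m a c)
      = ∑ i ∈ Finset.range (m + 1), ((Nat.choose m i : ℂ)) • op (m + n - i) (op i a b) c)

/-- The vertex Poisson algebra axioms for data `(S, d, op)` on a commutative algebra. -/
def IsVertexPoissonData {S : Type} [CommRing S] [Algebra ℂ S]
    (d : S →ₗ[ℂ] S) (op : ℕ → S →ₗ[ℂ] S →ₗ[ℂ] S) : Prop :=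
  IsVertexLieData d op ∧
  (∀ (n : ℕ) (a b c : S), op n a (b * c) = op n a b * c + b * op n a c)

namespace Ideal

variable {S : Type} [CommRing S] [Algebra ℂ S]

/-- The ideal `S · ℂ[D](M)` of the paper. -/
def spanIterates (D : S →ₗ[ℂ] S) (M : Submodule ℂ S) : Ideal S :=
  span {x | ∃ (m : ℕ) (y : S), y ∈ M ∧ x = (⇑D)^[m] y}

variable {D : S →ₗ[ℂ] S} {M : Submodule ℂ S}

theorem iterate_mem_spanIterates {y : S} (hy : y ∈ M) (m : ℕ) :
    (⇑D)^[m] y ∈ spanIterates D M :=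
  subset_span ⟨m, y, hy, rfl⟩

theorem mem_spanIterates_of_mem {y : S} (hy : y ∈ M) : y ∈ spanIterates D M :=
  iterate_mem_spanIterates hy 0

theorem mapsTo_spanIterates (hD : ∀ x y, D (x * y) = x * D y + y * D x) :
    Set.MapsTo D (spanIterates D M) (spanIterates D M) := by
  intro x hx
  induction hx using Submodule.span_induction with
  | mem x hx =>
    obtain ⟨m, y, hy, rfl⟩ := hx
    rw [← Function.iterate_succ_apply' D]
    exact iterate_mem_spanIterates hy (m + 1)
  | zero => simp
  | add x y _ _ hx hy => rw [map_add]; exact add_mem hx hy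
  | smul a x hx hDx =>
    rw [smul_eq_mul, hD]
    exact add_mem (mul_mem_left _ _ hDx) (mul_mem_right _ _ hx)

theorem spanIterates_le_ker {T F : Type} [Semiring T] [FunLike F S T] [RingHomClass F S T]
    (g : F) (hM : ∀ y ∈ M, g y = 0) (hD : ∀ s, g s = 0 → g (D s) = 0) :
    spanIterates D M ≤ RingHom.ker g := by
  refine span_le.mpr ?_
  rintro _ ⟨m, y, hy, rfl⟩
  induction m with
  | zero => exact hM y hy
  | succ m ih => exact (Function.iterate_succ_apply' D m y).symm ▸ hD _ ih

end Ideal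

namespace IsVertexPoissonData

variable {S : Type} [CommRing S] [Algebra ℂ S] {D : S →ₗ[ℂ] S}
  {op : ℕ → S →ₗ[ℂ] S →ₗ[ℂ] S} {I : Ideal S}

theorem op_mul (hVP : IsVertexPoissonData D op) (n : ℕ) (a b c : S) :
    op n a (b * c) = op n a b * c + b * op n a c :=
  hVP.2 n a b c

theorem op_apply_one (hVP : IsVertexPoissonData D op) (n : ℕ) (a : S) : op n a 1 = 0 := by
  simpa using hVP.op_mul n a 1 1

theorem op_one_apply (hVP : IsVertexPoissonData D op) (n : ℕ) (a : S) : op n 1 a = 0 := by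
  have h := hVP.op_apply_one
  obtain ⟨⟨-, -, -, hskew, -⟩, -⟩ := hVP
  rw [hskew 1 a n 0 fun i _ => h _ _, Finset.sum_range_zero]

theorem op_mem_of_op_swap_mem (hVP : IsVertexPoissonData D op) (hI : Set.MapsTo D I I)
    {a b : S} (h : ∀ m, op m b a ∈ I) (n : ℕ) : op n a b ∈ I := by
  obtain ⟨⟨hfin, -, -, hskew, -⟩, -⟩ := hVP
  obtain ⟨N, hN⟩ := hfin b a
  rw [hskew a b n N fun i hi => hN _ (hi.trans (Nat.le_add_left _ _))]
  exact sum_mem fun i _ => Submodule.smul_of_tower_mem _ _ (hI.iterate i (h _))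

theorem op_iterate_mem (hVP : IsVertexPoissonData D op) {u s : S} (h : ∀ j, op j u s ∈ I)
    (m k : ℕ) : op k ((⇑D)^[m] u) s ∈ I := by
  obtain ⟨⟨-, hD0, hDsucc, -, -⟩, -⟩ := hVP
  induction m generalizing u with
  | zero => exact h k
  | succ m ih =>
    rw [Function.iterate_succ_apply]
    refine ih fun j => ?_
    cases j with
    | zero => rw [hD0]; exact zero_mem _
    | succ j => rw [hDsucc]; exact Submodule.smul_of_tower_mem _ _ (h j)

theorem op_mul_mem (hVP : IsVertexPoissonData D op) (hI : Set.MapsTo D I I) {x x' y : S}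
    (hx : ∀ k, op k x y ∈ I) (hx' : ∀ k, op k x' y ∈ I) (n : ℕ) : op n (x * x') y ∈ I := by
  refine hVP.op_mem_of_op_swap_mem hI (fun m => ?_) n
  rw [hVP.op_mul]
  exact add_mem (Ideal.mul_mem_right _ _ (hVP.op_mem_of_op_swap_mem hI hx m))
    (Ideal.mul_mem_left _ _ (hVP.op_mem_of_op_swap_mem hI hx' m))

theorem op_mem_of_adjoin_eq_top (hVP : IsVertexPoissonData D op) (hI : Set.MapsTo D I I)
    {G : Set S} (hG : Algebra.adjoin ℂ G = ⊤) {y : S} (hy : ∀ g ∈ G, ∀ k, op k g y ∈ I)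
    (s : S) (k : ℕ) : op k s y ∈ I := by
  have hs : s ∈ Algebra.adjoin ℂ G := hG ▸ Algebra.mem_top
  induction hs using Algebra.adjoin_induction generalizing k with
  | mem g hg => exact hy g hg k
  | algebraMap r =>
    rw [Algebra.algebraMap_eq_smul_one, map_smul, LinearMap.smul_apply, hVP.op_one_apply,
      smul_zero]
    exact zero_mem _
  | add x x' _ _ hx hx' => rw [map_add, LinearMap.add_apply]; exact add_mem (hx k) (hx' k)
  | mul x x' _ _ hx hx' => exact hVP.op_mul_mem hI hx hx' k

theorem op_left_mem_of_mem_span (hVP : IsVertexPoissonData D op) (hI : Set.MapsTo D I I)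
    {G X : Set S} (hG : Algebra.adjoin ℂ {x | ∃ (m : ℕ), ∃ g ∈ G, x = (⇑D)^[m] g} = ⊤)
    (hX : ∀ y ∈ X, ∀ g ∈ G, ∀ k, op k g y ∈ I) {y : S} (hy : y ∈ Submodule.span ℂ X)
    (k : ℕ) (s : S) : op k y s ∈ I := by
  induction hy using Submodule.span_induction generalizing k s with
  | mem y hy =>
    refine hVP.op_mem_of_op_swap_mem hI (fun m => ?_) k
    refine hVP.op_mem_of_adjoin_eq_top hI hG ?_ s m
    rintro _ ⟨m', g, hg, rfl⟩ j
    exact hVP.op_iterate_mem (hX y hy g hg) m' j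
  | zero => simp
  | add y y' _ _ hy hy' => rw [map_add, LinearMap.add_apply]; exact add_mem (hy k s) (hy' k s)
  | smul c y _ hy =>
    rw [map_smul, LinearMap.smul_apply]
    exact Submodule.smul_of_tower_mem _ _ (hy k s)

theorem op_left_mem_spanIterates (hVP : IsVertexPoissonData D op)
    (hD : ∀ x y, D (x * y) = x * D y + y * D x) {G X : Set S}
    (hG : Algebra.adjoin ℂ {x | ∃ (m : ℕ), ∃ g ∈ G, x = (⇑D)^[m] g} = ⊤)
    (hX : ∀ y ∈ X, ∀ g ∈ G, ∀ k, op k g y ∈ Ideal.spanIterates D (Submodule.span ℂ X))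
    {x : S} (hx : x ∈ Ideal.spanIterates D (Submodule.span ℂ X)) (k : ℕ) (s : S) :
    op k x s ∈ Ideal.spanIterates D (Submodule.span ℂ X) := by
  have hI := Ideal.mapsTo_spanIterates (M := Submodule.span ℂ X) hD
  induction hx using Submodule.span_induction generalizing k s with
  | mem z hz =>
    obtain ⟨m, y, hy, rfl⟩ := hz
    exact hVP.op_iterate_mem (fun j => hVP.op_left_mem_of_mem_span hI hG hX hy j s) m k
  | zero => simp
  | add y y' _ _ hy hy' => rw [map_add, LinearMap.add_apply]; exact add_mem (hy k s) (hy' k s)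
  | smul a y hy ih =>
    refine hVP.op_mem_of_op_swap_mem hI (fun m => ?_) k
    rw [smul_eq_mul, hVP.op_mul]
    exact add_mem (Ideal.mul_mem_left _ _ hy)
      (Ideal.mul_mem_left _ _ (hVP.op_mem_of_op_swap_mem hI (fun m' => ih m' s) m))

end IsVertexPoissonData

section Complement

variable {S : Type} [CommRing S] [Algebra ℂ S] {I : Ideal S}

theorem inf_sup_span_range_eq {M : Type} [AddCommGroup M] [Module ℂ M] {P : Submodule ℂ S}
    (φ : M →ₗ[ℂ] S) (hφ : ∀ a, φ a ∈ P) (h : ∀ x ∈ P, ∃ a, x - φ a ∈ I) :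
    I.restrictScalars ℂ ⊓ P ⊔ Submodule.span ℂ (Set.range φ) = P := by
  refine le_antisymm (sup_le inf_le_right (Submodule.span_le.mpr (Set.range_subset_iff.mpr hφ)))
    fun x hx => ?_
  obtain ⟨a, ha⟩ := h x hx
  rw [← sub_add_cancel x (φ a)]
  exact Submodule.add_mem_sup ⟨ha, sub_mem hx (hφ a)⟩ (Submodule.subset_span ⟨a, rfl⟩)

theorem inf_inf_span_range_eq_bot {M : Type} [AddCommGroup M] [Module ℂ M] (P : Submodule ℂ S)
    (φ : M →ₗ[ℂ] S) (h : ∀ a, φ a ∈ I → a = 0) :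
    I.restrictScalars ℂ ⊓ P ⊓ Submodule.span ℂ (Set.range φ) = ⊥ := by
  refine eq_bot_iff.mpr fun x ⟨⟨hxI, _⟩, hxφ⟩ => ?_
  rw [← LinearMap.coe_range, Submodule.span_eq] at hxφ
  obtain ⟨a, rfl⟩ := hxφ
  rw [h a hxI, map_zero]
  exact zero_mem _

theorem exists_sub_mem_of_mem_adjoin {A : Type} [CommRing A] [Algebra ℂ A] (φ : A →ₗ[ℂ] S)
    (h1 : φ 1 - 1 ∈ I) (hmul : ∀ a a', φ a * φ a' - φ (a * a') ∈ I) {x : S}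
    (hx : x ∈ Algebra.adjoin ℂ (Set.range φ)) : ∃ a, x - φ a ∈ I := by
  induction hx using Algebra.adjoin_induction with
  | mem _ hx =>
    obtain ⟨a, rfl⟩ := hx
    exact ⟨a, by simp⟩
  | algebraMap r =>
    refine ⟨r • 1, ?_⟩
    rw [Algebra.algebraMap_eq_smul_one, map_smul, ← smul_sub, ← neg_sub]
    exact Submodule.smul_of_tower_mem _ r (neg_mem h1)
  | add x y _ _ hx hy =>
    obtain ⟨a, ha⟩ := hx
    obtain ⟨b, hb⟩ := hy
    refine ⟨a + b, ?_⟩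
    rw [map_add, add_sub_add_comm]
    exact add_mem ha hb
  | mul x y _ _ hx hy =>
    obtain ⟨a, ha⟩ := hx
    obtain ⟨b, hb⟩ := hy
    refine ⟨a * b, ?_⟩
    have key : x * y - φ (a * b) =
        (x - φ a) * y + φ a * (y - φ b) + (φ a * φ b - φ (a * b)) := by
      ring
    rw [key]
    exact add_mem (add_mem (I.mul_mem_right _ ha) (I.mul_mem_left _ hb)) (hmul a b)

theorem exists_sub_mem_of_mem_mul_span {A B : Type} [AddCommGroup B] [Module ℂ B] [SMul A B]
    (φ : A → S) (ψ : B →ₗ[ℂ] S) {P : Submodule ℂ S} (hP : ∀ x ∈ P, ∃ a, x - φ a ∈ I)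
    (hmul : ∀ a b, φ a * ψ b - ψ (a • b) ∈ I) {x : S}
    (hx : x ∈ P * Submodule.span ℂ (Set.range ψ)) : ∃ b, x - ψ b ∈ I := by
  refine Submodule.mul_induction_on hx (fun m hm n hn => ?_) fun x y ⟨b, hb⟩ ⟨b', hb'⟩ => ?_
  · rw [← LinearMap.coe_range, Submodule.span_eq] at hn
    obtain ⟨b, rfl⟩ := hn
    obtain ⟨a, ha⟩ := hP m hm
    refine ⟨a • b, ?_⟩
    have key : m * ψ b - ψ (a • b) = (m - φ a) * ψ b + (φ a * ψ b - ψ (a • b)) := by ring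
    rw [key]
    exact add_mem (I.mul_mem_right _ ha) (hmul a b)
  · refine ⟨b + b', ?_⟩
    rw [map_add, add_sub_add_comm]
    exact add_mem hb hb'

end Complement

section QuotientModel

variable {C0 C1 : Type} [AddCommGroup C0] [Module ℂ C0] [AddCommGroup C1] [Module ℂ C1]
  (T : OneTruncData C0 C1)

theorem DQ_single (n : ℕ) (b : C1) :
    DQ T (0, Finsupp.single n b) = ((0, Finsupp.single (n + 1) b) : QC C0 C1) := by
  simp [DQ, Finsupp.mapDomain_single]

theorem opQ_inl (k : ℕ) (p : C0 × C1) (a : C0) :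
    opQ T k p (a, 0) = if k = 0 then ((T.γ p.2 a, 0) : QC C0 C1) else 0 := by
  simp [opQ]

theorem opQ_single_zero (k : ℕ) (p : C0 × C1) (b : C1) :
    opQ T k p (0, Finsupp.single 0 b) =
      if k = 0 then ((T.β p.1 b, Finsupp.single 0 (T.br p.2 b)) : QC C0 C1)
      else if k = 1 then (T.pr p.2 b, 0) else 0 := by
  rcases k with _ | _ | k <;> simp [opQ, embQ, embQB, Finsupp.sum_single_index]

end QuotientModel

theorem adjoin_range_eq_top_of_existsUnique_lift {M S : Type} [AddCommGroup M] [Module ℂ M]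
    [CommRing S] [Algebra ℂ S] (ι : M →ₗ[ℂ] S)
    (hUniv : ∀ (T : Type) [CommRing T] [Algebra ℂ T] (f : M →ₗ[ℂ] T),
      ∃! g : S →ₐ[ℂ] T, ∀ x, g (ι x) = f x) :
    Algebra.adjoin ℂ (Set.range ι) = ⊤ := by
  set K := Algebra.adjoin ℂ (Set.range ι)
  obtain ⟨g, hg, -⟩ := hUniv K (ι.codRestrict (Subalgebra.toSubmodule K)
    fun x => Algebra.subset_adjoin ⟨x, rfl⟩)
  obtain ⟨g₀, -, huniq⟩ := hUniv S ι
  have hsection : K.val.comp g = AlgHom.id ℂ S :=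
    (huniq _ fun x => congrArg Subtype.val (hg x)).trans (huniq _ fun _ => rfl).symm
  refine eq_top_iff.mpr fun s _ => ?_
  rw [← show K.val (g s) = s from DFunLike.congr_fun hsection s]
  exact (g s).2

section Generation

variable {A B : Type} [AddCommGroup A] [Module ℂ A] [AddCommGroup B] [Module ℂ B]
  {S : Type} [CommRing S] [Algebra ℂ S] {T : OneTruncData A B} {ι : QC A B →ₗ[ℂ] S}
  {DS : S →ₗ[ℂ] S}

theorem apply_mem_span_iterate_genQ (hDSι : ∀ x : QC A B, DS (ι x) = ι (DQ T x))
    (x : QC A B) :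
    ι x ∈ Submodule.span ℂ {s | ∃ (m : ℕ), ∃ g ∈ Set.range (ι ∘ genQ), s = (⇑DS)^[m] g} := by
  have hsingle : ∀ n b, ι (0, Finsupp.single n b) = (⇑DS)^[n] (ι (genQ (0, b))) := by
    intro n b
    induction n with
    | zero => rfl
    | succ n ih => rw [Function.iterate_succ_apply', ← ih, hDSι, DQ_single]
  have hx : x = (x.1, 0) + (0, x.2) := by simp
  rw [hx, map_add]
  refine add_mem (Submodule.subset_span ⟨0, _, ⟨(x.1, 0), by simp [genQ]⟩, rfl⟩) ?_
  induction x.2 using Finsupp.induction_linear with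
  | zero => rw [Prod.mk_zero_zero, map_zero]; exact zero_mem _
  | add f f' hf hf' =>
    rw [← add_zero (0 : A), ← Prod.mk_add_mk, map_add]
    exact add_mem hf hf'
  | single n b => exact Submodule.subset_span ⟨n, _, ⟨(0, b), rfl⟩, hsingle n b⟩

theorem adjoin_iterate_genQ_eq_top
    (hUniv : ∀ (T' : Type) [CommRing T'] [Algebra ℂ T'] (f : QC A B →ₗ[ℂ] T'),
      ∃! g : S →ₐ[ℂ] T', ∀ x, g (ι x) = f x)
    (hDSι : ∀ x : QC A B, DS (ι x) = ι (DQ T x)) :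
    Algebra.adjoin ℂ {s | ∃ (m : ℕ), ∃ g ∈ Set.range (ι ∘ genQ), s = (⇑DS)^[m] g} = ⊤ := by
  refine eq_top_iff.mpr ((adjoin_range_eq_top_of_existsUnique_lift ι hUniv).ge.trans ?_)
  exact Algebra.adjoin_le (Set.range_subset_iff.mpr fun x =>
    Algebra.span_le_adjoin ℂ _ (apply_mem_span_iterate_genQ hDSι x))

end Generation

section SymmetricAlgebra

variable {A B S : Type} [AddCommGroup A] [Module ℂ A] [AddCommGroup B] [Module ℂ B]
  [CommRing S] [Algebra ℂ S] (ι : QC A B →ₗ[ℂ] S)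

def embA : A →ₗ[ℂ] S := ι ∘ₗ LinearMap.inl ℂ A (ℕ →₀ B)

def embB : B →ₗ[ℂ] S := ι ∘ₗ LinearMap.inr ℂ A (ℕ →₀ B) ∘ₗ Finsupp.lsingle 0

theorem embA_apply (a : A) : embA ι a = ι (a, 0) := rfl

theorem embB_apply (b : B) : embB ι b = ι (0, Finsupp.single 0 b) := rfl

theorem apply_single_zero (a : A) (b : B) :
    ι (a, Finsupp.single 0 b) = embA ι a + embB ι b := by
  rw [embA_apply, embB_apply, ← map_add, Prod.mk_add_mk, add_zero, zero_add]

end SymmetricAlgebra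

section GeneratorAction

variable {A B S : Type} [CommRing A] [Algebra ℂ A] [AddCommGroup B] [Module ℂ B]
  [CommRing S] [Algebra ℂ S] {ι : QC A B →ₗ[ℂ] S} {br : B →ₗ[ℂ] B →ₗ[ℂ] B}
  {anch : B →ₗ[ℂ] A →ₗ[ℂ] A} {pr : B →ₗ[ℂ] B →ₗ[ℂ] A} {d : A →ₗ[ℂ] B}
  {opS : ℕ → S →ₗ[ℂ] S →ₗ[ℂ] S}

theorem op_genQ_embA
    (hgen : ∀ (n : ℕ) (p : A × B) (x : QC A B),
      opS n (ι (genQ p)) (ι x) = ι (opQ (courantTrunc br anch pr d) n p x))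
    (k : ℕ) (p : A × B) (a : A) :
    opS k (ι (genQ p)) (embA ι a) = if k = 0 then embA ι (anch p.2 a) else 0 := by
  rw [embA_apply, hgen, opQ_inl]
  split_ifs <;> simp [courantTrunc, embA_apply]

theorem op_genQ_embB
    (hgen : ∀ (n : ℕ) (p : A × B) (x : QC A B),
      opS n (ι (genQ p)) (ι x) = ι (opQ (courantTrunc br anch pr d) n p x))
    (k : ℕ) (p : A × B) (b : B) :
    opS k (ι (genQ p)) (embB ι b) =
      if k = 0 then embB ι (br p.2 b) - embA ι (anch b p.1)
      else if k = 1 then embA ι (pr p.2 b) else 0 := by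
  rw [embB_apply, hgen, opQ_single_zero]
  split_ifs
  · simp [courantTrunc, apply_single_zero, sub_eq_neg_add]
  · rfl
  · exact map_zero ι

end GeneratorAction

section CourantRelations

variable {A B S : Type} [CommRing A] [Algebra ℂ A] [AddCommGroup B] [Module ℂ B] [Module A B]
  [CommRing S] [Algebra ℂ S]

/-- Spans the subspace `E = E₀ ⊕ E₁` of the paper. -/
def courantRelations (φ : A →ₗ[ℂ] S) (ψ : B →ₗ[ℂ] S) : Set S :=
  insert (φ 1 - 1) {x | ∃ a a' : A, x = φ a * φ a' - φ (a * a')} ∪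
    {x | ∃ (a : A) (b : B), x = φ a * ψ b - ψ (a • b)}

theorem mul_sub_mem_span_courantRelations (φ : A →ₗ[ℂ] S) (ψ : B →ₗ[ℂ] S) (a a' : A) :
    φ a * φ a' - φ (a * a') ∈ Submodule.span ℂ (courantRelations φ ψ) :=
  Submodule.subset_span (Or.inl (Or.inr ⟨a, a', rfl⟩))

theorem smul_sub_mem_span_courantRelations (φ : A →ₗ[ℂ] S) (ψ : B →ₗ[ℂ] S) (a : A) (b : B) :
    φ a * ψ b - ψ (a • b) ∈ Submodule.span ℂ (courantRelations φ ψ) :=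
  Submodule.subset_span (Or.inr ⟨a, b, rfl⟩)

variable {br : B →ₗ[ℂ] B →ₗ[ℂ] B} {anch : B →ₗ[ℂ] A →ₗ[ℂ] A} {pr : B →ₗ[ℂ] B →ₗ[ℂ] A}
  {d : A →ₗ[ℂ] B}

theorem IsCourant.anch_mul (hC : IsCourant br anch pr d) (u : B) (a a' : A) :
    anch u (a * a') = a * anch u a' + a' * anch u a :=
  hC.2.1 u a a'

theorem IsCourant.anch_smul (hC : IsCourant br anch pr d) (a : A) (u : B) (a' : A) :
    anch (a • u) a' = a * anch u a' :=
  hC.2.2.1 a u a'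

theorem IsCourant.br_smul (hC : IsCourant br anch pr d) (u : B) (a : A) (v : B) :
    br u (a • v) = a • br u v + anch u a • v :=
  hC.2.2.2.2.2.2.2.2.1 u a v

theorem IsCourant.anch_one (hC : IsCourant br anch pr d) (u : B) : anch u 1 = 0 := by
  simpa using hC.anch_mul u 1 1

theorem IsCourant.pr_smul_right (hC : IsCourant br anch pr d) (u : B) (a : A) (v : B) :
    pr u (a • v) = a * pr u v := by
  rw [hC.2.2.2.2.2.1, hC.2.2.2.2.1, hC.2.2.2.2.2.1]

theorem IsCourant.d_mul (hC : IsCourant br anch pr d) (a a' : A) :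
    d (a * a') = a • d a' + a' • d a :=
  hC.2.2.2.2.2.2.1 a a'

variable {ι : QC A B →ₗ[ℂ] S} {DS : S →ₗ[ℂ] S} {opS : ℕ → S →ₗ[ℂ] S →ₗ[ℂ] S}

theorem op_genQ_mul_sub_mem_span (hC : IsCourant br anch pr d)
    (hVP : IsVertexPoissonData DS opS)
    (hgen : ∀ (n : ℕ) (p : A × B) (x : QC A B),
      opS n (ι (genQ p)) (ι x) = ι (opQ (courantTrunc br anch pr d) n p x))
    (p : A × B) (k : ℕ) (a a' : A) :
    opS k (ι (genQ p)) (embA ι a * embA ι a' - embA ι (a * a')) ∈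
      Submodule.span ℂ (courantRelations (embA ι) (embB ι)) := by
  rw [map_sub, hVP.op_mul, op_genQ_embA hgen, op_genQ_embA hgen, op_genQ_embA hgen]
  rcases k with _ | k
  · have key : embA ι (anch p.2 a) * embA ι a' + embA ι a * embA ι (anch p.2 a')
          - embA ι (anch p.2 (a * a'))
        = (embA ι (anch p.2 a) * embA ι a' - embA ι (anch p.2 a * a'))
          + (embA ι a * embA ι (anch p.2 a') - embA ι (a * anch p.2 a')) := by
      rw [hC.anch_mul, map_add, mul_comm (anch p.2 a) a']
      ring
    simpa only [if_true, key] using add_mem (mul_sub_mem_span_courantRelations _ _ _ _)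
      (mul_sub_mem_span_courantRelations _ _ _ _)
  · simp

theorem op_genQ_smul_sub_mem_span (hC : IsCourant br anch pr d)
    (hVP : IsVertexPoissonData DS opS)
    (hgen : ∀ (n : ℕ) (p : A × B) (x : QC A B),
      opS n (ι (genQ p)) (ι x) = ι (opQ (courantTrunc br anch pr d) n p x))
    (p : A × B) (k : ℕ) (a : A) (b : B) :
    opS k (ι (genQ p)) (embA ι a * embB ι b - embB ι (a • b)) ∈
      Submodule.span ℂ (courantRelations (embA ι) (embB ι)) := by
  rw [map_sub, hVP.op_mul, op_genQ_embA hgen, op_genQ_embB hgen, op_genQ_embB hgen]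
  rcases k with _ | _ | k
  · have key : embA ι (anch p.2 a) * embB ι b
          + embA ι a * (embB ι (br p.2 b) - embA ι (anch b p.1))
          - (embB ι (br p.2 (a • b)) - embA ι (anch (a • b) p.1))
        = (embA ι (anch p.2 a) * embB ι b - embB ι (anch p.2 a • b))
          + (embA ι a * embB ι (br p.2 b) - embB ι (a • br p.2 b))
          - (embA ι a * embA ι (anch b p.1) - embA ι (a * anch b p.1)) := by
      rw [hC.anch_smul, hC.br_smul, map_add]
      ring
    simpa only [if_true, key] using
      sub_mem (add_mem (smul_sub_mem_span_courantRelations _ _ _ _)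
        (smul_sub_mem_span_courantRelations _ _ _ _)) (mul_sub_mem_span_courantRelations _ _ _ _)
  · simpa [hC.pr_smul_right] using mul_sub_mem_span_courantRelations _ (embB ι) a (pr p.2 b)
  · simp

theorem op_genQ_mem_span_courantRelations (hC : IsCourant br anch pr d)
    (hVP : IsVertexPoissonData DS opS)
    (hgen : ∀ (n : ℕ) (p : A × B) (x : QC A B),
      opS n (ι (genQ p)) (ι x) = ι (opQ (courantTrunc br anch pr d) n p x))
    (p : A × B) (k : ℕ) {y : S} (hy : y ∈ courantRelations (embA ι) (embB ι)) :
    opS k (ι (genQ p)) y ∈ Submodule.span ℂ (courantRelations (embA ι) (embB ι)) := by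
  rcases hy with (rfl | ⟨a, a', rfl⟩) | ⟨a, b, rfl⟩
  · rw [map_sub, op_genQ_embA hgen, hVP.op_apply_one]
    split_ifs <;> simp [hC.anch_one]
  · exact op_genQ_mul_sub_mem_span hC hVP hgen p k a a'
  · exact op_genQ_smul_sub_mem_span hC hVP hgen p k a b

theorem op_mem_spanIterates_courantRelations (hC : IsCourant br anch pr d)
    (hVP : IsVertexPoissonData DS opS)
    (hUniv : ∀ (T' : Type) [CommRing T'] [Algebra ℂ T'] (f : QC A B →ₗ[ℂ] T'),
      ∃! g : S →ₐ[ℂ] T', ∀ x, g (ι x) = f x)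
    (hDSder : ∀ x y : S, DS (x * y) = x * DS y + y * DS x)
    (hDSι : ∀ x : QC A B, DS (ι x) = ι (DQ (courantTrunc br anch pr d) x))
    (hgen : ∀ (n : ℕ) (p : A × B) (x : QC A B),
      opS n (ι (genQ p)) (ι x) = ι (opQ (courantTrunc br anch pr d) n p x))
    (s : S) (n : ℕ) {x : S}
    (hx : x ∈ Ideal.spanIterates DS
      (Submodule.span ℂ (courantRelations (embA ι) (embB ι)))) :
    opS n s x ∈ Ideal.spanIterates DS
      (Submodule.span ℂ (courantRelations (embA ι) (embB ι))) := by
  refine hVP.op_mem_of_op_swap_mem (Ideal.mapsTo_spanIterates hDSder) (fun m => ?_) n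
  refine hVP.op_left_mem_spanIterates hDSder (adjoin_iterate_genQ_eq_top hUniv hDSι) ?_ hx m s
  rintro y hy _ ⟨p, rfl⟩ k
  exact Ideal.mem_spanIterates_of_mem (op_genQ_mem_span_courantRelations hC hVP hgen p k hy)

end CourantRelations

section TrivSqZeroExt

variable {A B : Type} [CommRing A] [AddCommGroup B] [Module A B]

abbrev moduleOppositeOfComm : Module Aᵐᵒᵖ B :=
  Module.compHom B ((RingHom.id A).fromOpposite mul_comm)

attribute [local instance] moduleOppositeOfComm

theorem isCentralScalar_moduleOppositeOfComm : IsCentralScalar A B := ⟨fun _ _ => rfl⟩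

attribute [local instance] isCentralScalar_moduleOppositeOfComm

variable [Algebra ℂ A] [Module ℂ B] [IsScalarTower ℂ A B]

def QC.toTrivSqZeroExt : QC A B →ₗ[ℂ] TrivSqZeroExt A B where
  toFun x := TrivSqZeroExt.inl x.1 + TrivSqZeroExt.inr (x.2 0)
  map_add' x y := by ext <;> simp
  map_smul' c x := by ext <;> simp

variable {S : Type} [CommRing S] [Algebra ℂ S] {T : OneTruncData A B} {ι : QC A B →ₗ[ℂ] S}
  {DS : S →ₗ[ℂ] S}

theorem exists_algHom_trivSqZeroExt
    (hUniv : ∀ (T' : Type) [CommRing T'] [Algebra ℂ T'] (f : QC A B →ₗ[ℂ] T'),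
      ∃! g : S →ₐ[ℂ] T', ∀ x, g (ι x) = f x)
    (hDSder : ∀ x y : S, DS (x * y) = x * DS y + y * DS x)
    (hDSι : ∀ x : QC A B, DS (ι x) = ι (DQ T x))
    (hd : ∀ a a' : A, T.d (a * a') = a • T.d a' + a' • T.d a) :
    ∃ g : S →ₐ[ℂ] TrivSqZeroExt A B, (∀ x, g (ι x) = QC.toTrivSqZeroExt x) ∧
      ∀ s, g (DS s) = TrivSqZeroExt.inr (T.d (g s).fst) := by
  obtain ⟨g, hg, -⟩ := hUniv _ QC.toTrivSqZeroExt
  refine ⟨g, hg, fun s => ?_⟩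
  have hs : s ∈ Algebra.adjoin ℂ (Set.range ι) :=
    adjoin_range_eq_top_of_existsUnique_lift ι hUniv ▸ Algebra.mem_top
  induction hs using Algebra.adjoin_induction with
  | mem _ hx =>
    obtain ⟨x, rfl⟩ := hx
    ext <;> simp [hDSι, hg, QC.toTrivSqZeroExt, DQ, Finsupp.mapDomain_of_notMem_range]
  | algebraMap r =>
    have hd1 : T.d 1 = 0 := by simpa using hd 1 1
    have hD1 : DS 1 = 0 := by simpa using hDSder 1 1
    simp [Algebra.algebraMap_eq_smul_one, hd1, hD1]
  | add x y _ _ hx hy => simp [hx, hy]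
  | mul x y _ _ hx hy => ext <;> simp [hDSder, hx, hy, hd]

theorem eq_zero_of_mem_spanIterates_courantRelations
    (hUniv : ∀ (T' : Type) [CommRing T'] [Algebra ℂ T'] (f : QC A B →ₗ[ℂ] T'),
      ∃! g : S →ₐ[ℂ] T', ∀ x, g (ι x) = f x)
    (hDSder : ∀ x y : S, DS (x * y) = x * DS y + y * DS x)
    (hDSι : ∀ x : QC A B, DS (ι x) = ι (DQ T x))
    (hd : ∀ a a' : A, T.d (a * a') = a • T.d a' + a' • T.d a) :
    (∀ a, embA ι a ∈ Ideal.spanIterates DS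
        (Submodule.span ℂ (courantRelations (embA ι) (embB ι))) → a = 0) ∧
    (∀ b, embB ι b ∈ Ideal.spanIterates DS
        (Submodule.span ℂ (courantRelations (embA ι) (embB ι))) → b = 0) := by
  obtain ⟨g, hg, hgD⟩ := exists_algHom_trivSqZeroExt hUniv hDSder hDSι hd
  have hgA : ∀ a, g (embA ι a) = TrivSqZeroExt.inl a := by
    simp [embA_apply, hg, QC.toTrivSqZeroExt]
  have hgB : ∀ b, g (embB ι b) = TrivSqZeroExt.inr b := by
    simp [embB_apply, hg, QC.toTrivSqZeroExt]
  have hrel : Submodule.span ℂ (courantRelations (embA ι) (embB ι)) ≤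
      LinearMap.ker g.toLinearMap := by
    refine Submodule.span_le.mpr ?_
    rintro _ ((rfl | ⟨a, a', rfl⟩) | ⟨a, b, rfl⟩) <;>
      simp [hgA, hgB, TrivSqZeroExt.inl_mul_inr]
  have hker := Ideal.spanIterates_le_ker g (fun y hy => hrel hy) (D := DS)
    fun s hs => by rw [hgD, hs]; simp
  refine ⟨fun a ha => ?_, fun b hb => ?_⟩
  · simpa [hgA] using congrArg TrivSqZeroExt.fst (RingHom.mem_ker.mp (hker ha))
  · simpa [hgB] using congrArg TrivSqZeroExt.snd (RingHom.mem_ker.mp (hker hb))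

end TrivSqZeroExt

/-- Let `B` be a Courant `A`-algebroid and `S = S(𝒞)` the associated `ℕ`-graded
vertex Poisson algebra. With `E = E₀ ⊕ E₁` as above and `I_B = S·ℂ[D](E)`,
`I_B` is an ideal of the vertex Poisson algebra `S`; moreover
`S₍₀₎ = (I_B)₍₀₎ ⊕ A` and `S₍₁₎ = (I_B)₍₁₎ ⊕ B`, so the quotient `S/I_B` is an
`ℕ`-graded vertex Poisson algebra with degree-zero subspace `A` and degree-one
subspace `B`. -/
theorem stmt19 {A B : Type} [CommRing A] [Algebra ℂ A] [AddCommGroup B] [Module ℂ B]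
    [Module A B] [IsScalarTower ℂ A B]
    (br : B →ₗ[ℂ] B →ₗ[ℂ] B) (anch : B →ₗ[ℂ] A →ₗ[ℂ] A)
    (pr : B →ₗ[ℂ] B →ₗ[ℂ] A) (d : A →ₗ[ℂ] B)
    (hC : IsCourant br anch pr d)
    (S : Type) [CommRing S] [Algebra ℂ S]
    (ι : QC A B →ₗ[ℂ] S)
    (hUniv : ∀ (T' : Type) [CommRing T'] [Algebra ℂ T'] (f : QC A B →ₗ[ℂ] T'),
      ∃! g : S →ₐ[ℂ] T', ∀ x, g (ι x) = f x)
    (DS : S →ₗ[ℂ] S)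
    (hDSder : ∀ x y : S, DS (x * y) = x * DS y + y * DS x)
    (hDSι : ∀ x : QC A B, DS (ι x) = ι (DQ (courantTrunc br anch pr d) x))
    (opS : ℕ → S →ₗ[ℂ] S →ₗ[ℂ] S)
    (hVP : IsVertexPoissonData DS opS)
    (hgen : ∀ (n : ℕ) (p : A × B) (x : QC A B),
      opS n (ι (genQ p)) (ι x) = ι (opQ (courantTrunc br anch pr d) n p x))
    (ιA : A → S) (hιA : ∀ a : A, ιA a = ι ((a, 0) : QC A B))
    (ιB : B → S) (hιB : ∀ b : B, ιB b = ι ((0, Finsupp.single 0 b) : QC A B))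
    (E0 E1 : Submodule ℂ S)
    (hE0 : E0 = Submodule.span ℂ
      (insert (ιA 1 - 1) {x : S | ∃ a a' : A, x = ιA a * ιA a' - ιA (a * a')}))
    (hE1 : E1 = Submodule.span ℂ
      {x : S | ∃ (a : A) (b : B), x = ιA a * ιB b - ιB (a • b)})
    (IB : Ideal S)
    (hIB : IB = Ideal.span
      {x : S | ∃ (m : ℕ) (y : S), y ∈ (E0 ⊔ E1 : Submodule ℂ S) ∧ x = (⇑DS)^[m] y})
    (gr : ℕ → Submodule ℂ S)
    (hgr0 : gr 0 = Subalgebra.toSubmodule (Algebra.adjoin ℂ (Set.range ιA)))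
    (hgr1 : gr 1 = gr 0 * Submodule.span ℂ (Set.range ιB)) :
    -- I_B is an ideal of the vertex Poisson algebra S:
    (∀ x ∈ IB, DS x ∈ IB) ∧
    (∀ (s : S) (n : ℕ), ∀ x ∈ IB, opS n s x ∈ IB) ∧
    -- S₍₀₎ = (I_B)₍₀₎ ⊕ A:
    ((IB.restrictScalars ℂ ⊓ gr 0) ⊔ Submodule.span ℂ (Set.range ιA) = gr 0) ∧
    ((IB.restrictScalars ℂ ⊓ gr 0) ⊓ Submodule.span ℂ (Set.range ιA) = ⊥) ∧
    -- S₍₁₎ = (I_B)₍₁₎ ⊕ B: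
    ((IB.restrictScalars ℂ ⊓ gr 1) ⊔ Submodule.span ℂ (Set.range ιB) = gr 1) ∧
    ((IB.restrictScalars ℂ ⊓ gr 1) ⊓ Submodule.span ℂ (Set.range ιB) = ⊥) := by
  have hιA' : ιA = embA ι := funext hιA
  have hιB' : ιB = embB ι := funext hιB
  subst hιA' hιB'
  obtain rfl : IB = Ideal.spanIterates DS
      (Submodule.span ℂ (courantRelations (embA ι) (embB ι))) := by
    rw [hIB, hE0, hE1, ← Submodule.span_union]
    rfl
  have hrel : ∀ {y}, y ∈ Submodule.span ℂ (courantRelations (embA ι) (embB ι)) →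
      y ∈ Ideal.spanIterates DS (Submodule.span ℂ (courantRelations (embA ι) (embB ι))) :=
    Ideal.mem_spanIterates_of_mem
  have hA0 : ∀ x ∈ gr 0, ∃ a, x - embA ι a ∈ _ := fun x hx =>
    exists_sub_mem_of_mem_adjoin _ (hrel (Submodule.subset_span (Or.inl (Set.mem_insert _ _))))
      (fun a a' => hrel (mul_sub_mem_span_courantRelations _ _ a a')) (by rwa [hgr0] at hx)
  have hB1 : ∀ x ∈ gr 1, ∃ b, x - embB ι b ∈ _ := fun x hx =>
    exists_sub_mem_of_mem_mul_span (embA ι) (embB ι) hA0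
      (fun a b => hrel (smul_sub_mem_span_courantRelations _ _ a b)) (by rwa [hgr1] at hx)
  have hgr0A : ∀ a, embA ι a ∈ gr 0 := fun a => hgr0 ▸ Algebra.subset_adjoin ⟨a, rfl⟩
  have hgr1B : ∀ b, embB ι b ∈ gr 1 := fun b => by
    rw [hgr1, ← one_mul (embB ι b)]
    exact Submodule.mul_mem_mul (hgr0 ▸ (Algebra.adjoin ℂ _).one_mem)
      (Submodule.subset_span ⟨b, rfl⟩)
  obtain ⟨hA, hB⟩ := eq_zero_of_mem_spanIterates_courantRelations hUniv hDSder hDSι hC.d_mul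
  exact ⟨fun x hx => Ideal.mapsTo_spanIterates hDSder hx,
    fun s n x hx => op_mem_spanIterates_courantRelations hC hVP hUniv hDSder hDSι hgen s n hx,
    inf_sup_span_range_eq _ hgr0A hA0, inf_inf_span_range_eq_bot _ _ hA,
    inf_sup_span_range_eq _ hgr1B hB1, inf_inf_span_range_eq_bot _ _ hB⟩
end
end
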